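/- arXiv:1307.5110 — 5 statements merged into one kernel-verified Lean document; each statement's English description precedes it below -/
import Mathlib

section
/- Let G be a weighted graph containing a pendant vertex v whose unique neighbor is u. Then i₊(G) = i₊(G − u − v) + 1 and i₋(G) = i₋(G − u − v) + 1, where G − u − v denotes the weighted graph obtained from G by deleting the vertices u and v and all incident edges. -/
/-- Number of positive eigenvalues (with multiplicity) of a real matrix
(0 if the matrix is not symmetric/Hermitian). -/
noncomputable def iPos {m : Type*} [Fintype m] [DecidableEq m] (A : Matrix m m ℝ) : ℕ :=
  if h : A.IsHermitian then Nat.card {i // 0 < h.eigenvalues i} else 0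

/-- Number of negative eigenvalues (with multiplicity). -/
noncomputable def iNeg {m : Type*} [Fintype m] [DecidableEq m] (A : Matrix m m ℝ) : ℕ :=
  if h : A.IsHermitian then Nat.card {i // h.eigenvalues i < 0} else 0

/-- Multiplicity of the eigenvalue zero. -/
noncomputable def iZero {m : Type*} [Fintype m] [DecidableEq m] (A : Matrix m m ℝ) : ℕ :=
  if h : A.IsHermitian then Nat.card {i // h.eigenvalues i = 0} else 0

/-- `w` is a (positive) edge-weighting of the simple graph `G`; the matrix
`Matrix.of w` is then the weighted adjacency matrix of the weighted graph `(G, w)`. -/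
def IsWeighting {V : Type*} (G : SimpleGraph V) (w : V → V → ℝ) : Prop :=
  (∀ u v, w u v = w v u) ∧ (∀ u v, G.Adj u v → 0 < w u v) ∧ (∀ u v, ¬G.Adj u v → w u v = 0)

/-!
The positive index of inertia of a real quadratic form `q` is pinned down by a subspace of
dimension `p` on which `q` is positive definite together with a subspace of codimension `p`
on which `q ≤ 0`; it is therefore invariant under linear changes of variables and additive
under orthogonal sums. For a Hermitian matrix, spans of eigenvectors provide both subspaces,
with `p` the number of positive eigenvalues.

Eliminating along the pendant edge, the substitution `x_u = s`,
`x_v = t - (∑_r w u r * y_r) / w u v`, `x_r = y_r` (for `r ≠ u, v`) turns `xᵀ A x` into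
`yᵀ B y + 2 (w u v) s t`, where `B` is the matrix of `G - u - v`. The hyperbolic plane
`2 (w u v) s t` has one positive and one negative direction, so each index goes up by one;
negative eigenvalues are treated by the same argument applied to `-A`.
-/

open Matrix Module Submodule

def quadForm {n : Type*} [Fintype n] (A : Matrix n n ℝ) (x : n → ℝ) : ℝ := x ⬝ᵥ (A *ᵥ x)

@[simp]
lemma quadForm_zero {n : Type*} [Fintype n] (A : Matrix n n ℝ) : quadForm A 0 = 0 := by
  simp [quadForm]

lemma Submodule.finrank_prod {K M N : Type*} [DivisionRing K] [AddCommGroup M] [Module K M]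
    [AddCommGroup N] [Module K N] [FiniteDimensional K M] [FiniteDimensional K N]
    (P : Submodule K M) (Q : Submodule K N) :
    finrank K (P.prod Q) = finrank K P + finrank K Q := by
  have hinj : Function.Injective (P.subtype.prodMap Q.subtype) :=
    Prod.map_injective.mpr ⟨P.injective_subtype, Q.injective_subtype⟩
  rw [← Module.finrank_prod, ← LinearMap.finrank_range_of_inj hinj, LinearMap.range_prodMap,
    Submodule.range_subtype, Submodule.range_subtype]

section PositiveIndex

variable {X Y : Type*} [AddCommGroup X] [Module ℝ X] [AddCommGroup Y] [Module ℝ Y]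

def IsPositiveIndex (q : X → ℝ) (p : ℕ) : Prop :=
  (∃ P : Submodule ℝ X, finrank ℝ P = p ∧ ∀ x ∈ P, x ≠ 0 → 0 < q x) ∧
    ∃ N : Submodule ℝ X, finrank ℝ N + p = finrank ℝ X ∧ ∀ x ∈ N, q x ≤ 0

lemma IsPositiveIndex.comp_linearEquiv {q : X → ℝ} {p : ℕ} (h : IsPositiveIndex q p)
    (e : Y ≃ₗ[ℝ] X) : IsPositiveIndex (q ∘ e) p := by
  obtain ⟨⟨P, hPdim, hP⟩, N, hNdim, hN⟩ := h
  refine ⟨⟨P.map e.symm.toLinearMap, by rw [e.symm.finrank_map_eq, hPdim], fun x hx hx0 => ?_⟩,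
    N.map e.symm.toLinearMap, by rw [e.symm.finrank_map_eq, e.finrank_eq, hNdim],
    fun x hx => ?_⟩
  · rw [Submodule.mem_map_equiv, LinearEquiv.symm_symm] at hx
    exact hP _ hx (e.map_ne_zero_iff.mpr hx0)
  · rw [Submodule.mem_map_equiv, LinearEquiv.symm_symm] at hx
    exact hN _ hx

variable [FiniteDimensional ℝ X] [FiniteDimensional ℝ Y]

lemma finrank_add_finrank_le_of_pos_of_nonpos {q : X → ℝ} {P N : Submodule ℝ X}
    (hP : ∀ x ∈ P, x ≠ 0 → 0 < q x) (hN : ∀ x ∈ N, q x ≤ 0) :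
    finrank ℝ P + finrank ℝ N ≤ finrank ℝ X := by
  have hPN : P ⊓ N = ⊥ := (Submodule.eq_bot_iff _).mpr fun x hx => by
    by_contra hx0
    exact (hN x hx.2).not_gt (hP x hx.1 hx0)
  rw [← Submodule.finrank_sup_add_finrank_inf_eq, hPN, finrank_bot, add_zero]
  exact Submodule.finrank_le _

lemma IsPositiveIndex.unique {q : X → ℝ} {p p' : ℕ} (h : IsPositiveIndex q p)
    (h' : IsPositiveIndex q p') : p = p' := by
  obtain ⟨⟨P, rfl, hP⟩, N, hN, hNq⟩ := h
  obtain ⟨⟨P', rfl, hP'⟩, N', hN', hN'q⟩ := h'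
  have := finrank_add_finrank_le_of_pos_of_nonpos hP hN'q
  have := finrank_add_finrank_le_of_pos_of_nonpos hP' hNq
  omega

lemma IsPositiveIndex.prod {q : X → ℝ} {r : Y → ℝ} {p k : ℕ} (hq : IsPositiveIndex q p)
    (hr : IsPositiveIndex r k) (hq0 : q 0 = 0) (hr0 : r 0 = 0) :
    IsPositiveIndex (fun z : X × Y => q z.1 + r z.2) (p + k) := by
  obtain ⟨⟨P, hPdim, hP⟩, N, hNdim, hN⟩ := hq
  obtain ⟨⟨P', hP'dim, hP'⟩, N', hN'dim, hN'⟩ := hr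
  have hPnonneg : ∀ x ∈ P, 0 ≤ q x := fun x hx => by
    rcases eq_or_ne x 0 with rfl | hx0
    exacts [hq0.ge, (hP x hx hx0).le]
  have hP'nonneg : ∀ y ∈ P', 0 ≤ r y := fun y hy => by
    rcases eq_or_ne y 0 with rfl | hy0
    exacts [hr0.ge, (hP' y hy hy0).le]
  refine ⟨⟨P.prod P', by rw [Submodule.finrank_prod, hPdim, hP'dim], ?_⟩,
    N.prod N', by rw [Submodule.finrank_prod, Module.finrank_prod]; omega,
    fun z hz => add_nonpos (hN _ hz.1) (hN' _ hz.2)⟩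
  rintro ⟨x, y⟩ ⟨hx, hy⟩ hz
  rcases eq_or_ne x 0 with rfl | hx0
  · have hy0 : y ≠ 0 := fun hy0 => hz (by rw [hy0]; rfl)
    exact add_pos_of_nonneg_of_pos (hPnonneg _ hx) (hP' y hy hy0)
  · exact add_pos_of_pos_of_nonneg (hP x hx hx0) (hP'nonneg _ hy)

lemma isPositiveIndex_hyperbolic {a : ℝ} (ha : a ≠ 0) :
    IsPositiveIndex (fun z : ℝ × ℝ => a * z.1 * z.2) 1 := by
  refine ⟨⟨span ℝ {(1, a)}, finrank_span_singleton (by simp), fun z hz hz0 => ?_⟩,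
    span ℝ {(1, 0)}, ?_, fun z hz => ?_⟩
  · obtain ⟨c, rfl⟩ := mem_span_singleton.mp hz
    have hc : c ≠ 0 := by rintro rfl; simp at hz0
    simp only [Prod.smul_mk, smul_eq_mul, mul_one]
    nlinarith [mul_pos (mul_self_pos.mpr hc) (mul_self_pos.mpr ha)]
  · rw [finrank_span_singleton (by simp), Module.finrank_prod, Module.finrank_self]
  · obtain ⟨c, rfl⟩ := mem_span_singleton.mp hz
    simp

end PositiveIndex

section Hermitian
variable {n : Type*} [Fintype n] [DecidableEq n] {A : Matrix n n ℝ} (hA : A.IsHermitian)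

lemma eigenvectorBasis_dotProduct (i j : n) :
    ⇑(hA.eigenvectorBasis i) ⬝ᵥ ⇑(hA.eigenvectorBasis j) = if j = i then 1 else 0 := by
  rw [← orthonormal_iff_ite.mp hA.eigenvectorBasis.orthonormal j i,
    EuclideanSpace.inner_eq_star_dotProduct, star_trivial]

lemma quadForm_sum_smul_eigenvectorBasis {ι : Type*} [Fintype ι] {e : ι → n}
    (he : Function.Injective e) (c : ι → ℝ) :
    quadForm A (∑ i, c i • ⇑(hA.eigenvectorBasis (e i))) =
      ∑ i, hA.eigenvalues (e i) * c i ^ 2 := by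
  have hAv : A *ᵥ (∑ i, c i • ⇑(hA.eigenvectorBasis (e i))) =
      ∑ i, (hA.eigenvalues (e i) * c i) • ⇑(hA.eigenvectorBasis (e i)) := by
    simp only [mulVec_sum, mulVec_smul, hA.mulVec_eigenvectorBasis, smul_smul, mul_comm]
  rw [quadForm, hAv]
  simp only [sum_dotProduct, dotProduct_sum, smul_dotProduct, dotProduct_smul,
    eigenvectorBasis_dotProduct, smul_eq_mul, mul_ite, mul_one, mul_zero]
  refine Finset.sum_congr rfl fun i _ => ?_
  rw [Finset.sum_eq_single i (fun j _ hji => if_neg (he.ne hji.symm)) (by simp), if_pos rfl]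
  ring

lemma finrank_span_eigenvectorBasis (p : n → Prop) :
    finrank ℝ (span ℝ (Set.range fun i : {i // p i} => ⇑(hA.eigenvectorBasis i))) =
      Nat.card {i // p i} := by
  classical
  rw [finrank_span_eq_card, Nat.card_eq_fintype_card]
  exact (hA.eigenvectorBasis.orthonormal.linearIndependent.comp _ Subtype.val_injective).map'
    (WithLp.linearEquiv 2 ℝ (n → ℝ)).toLinearMap (LinearEquiv.ker _)

lemma exists_quadForm_eq_of_mem_span_eigenvectorBasis {p : n → Prop} [DecidablePred p]
    {x : n → ℝ}
    (hx : x ∈ span ℝ (Set.range fun i : {i // p i} => ⇑(hA.eigenvectorBasis i))) :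
    ∃ c : {i // p i} → ℝ, (x ≠ 0 → c ≠ 0) ∧
      quadForm A x = ∑ i, hA.eigenvalues i.1 * c i ^ 2 := by
  obtain ⟨c, rfl⟩ := (mem_span_range_iff_exists_fun ℝ).mp hx
  exact ⟨c, fun hx0 hc => hx0 (by simp [hc]),
    quadForm_sum_smul_eigenvectorBasis hA Subtype.val_injective c⟩

theorem isPositiveIndex_const_mul_quadForm (σ : ℝ) :
    IsPositiveIndex (fun x => σ * quadForm A x) (Nat.card {i // 0 < σ * hA.eigenvalues i}) := by
  refine ⟨⟨_, finrank_span_eigenvectorBasis hA _, fun x hx hx0 => ?_⟩,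
    span ℝ (Set.range fun i : {i // ¬ 0 < σ * hA.eigenvalues i} => ⇑(hA.eigenvectorBasis i)),
    ?_, fun x hx => ?_⟩
  · obtain ⟨c, hc, hq⟩ := exists_quadForm_eq_of_mem_span_eigenvectorBasis hA hx
    obtain ⟨i, hi⟩ := Function.ne_iff.mp (hc hx0)
    dsimp only
    rw [hq, Finset.mul_sum]
    refine Finset.sum_pos' (fun j _ => ?_) ⟨i, Finset.mem_univ _, ?_⟩
    · rw [← mul_assoc]
      exact mul_nonneg j.2.le (sq_nonneg _)
    · rw [← mul_assoc]
      exact mul_pos i.2 (sq_pos_of_ne_zero hi)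
  · have := Fintype.card_subtype_le fun i => 0 < σ * hA.eigenvalues i
    rw [finrank_span_eigenvectorBasis hA, Module.finrank_fintype_fun_eq_card,
      Nat.card_eq_fintype_card, Nat.card_eq_fintype_card, Fintype.card_subtype_compl]
    omega
  · obtain ⟨c, -, hq⟩ := exists_quadForm_eq_of_mem_span_eigenvectorBasis hA hx
    dsimp only
    rw [hq, Finset.mul_sum]
    refine Finset.sum_nonpos fun j _ => ?_
    rw [← mul_assoc]
    exact mul_nonpos_of_nonpos_of_nonneg (not_lt.mp j.2) (sq_nonneg _)

end Hermitian

lemma Fintype.sum_eq_add_add_sum_subtype_ne_and_ne {V M : Type*} [Fintype V] [DecidableEq V]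
    [AddCommMonoid M] {u v : V} (huv : u ≠ v) (g : V → M) :
    ∑ x, g x = g u + g v + ∑ s : {x : V // x ≠ u ∧ x ≠ v}, g s := by
  rw [← Finset.sum_sdiff (Finset.subset_univ {u, v}), Finset.sum_pair huv, add_comm,
    Finset.sum_subtype _ (p := fun x => x ≠ u ∧ x ≠ v) fun x => by simp [not_or]]

lemma isHermitian_of_symmetric {V : Type*} {w : V → V → ℝ} (hsymm : ∀ x y, w x y = w y x) :
    (of w).IsHermitian :=
  IsHermitian.ext fun i j => hsymm j i

section Pendant

variable {V : Type*} [Fintype V] [DecidableEq V] (w : V → V → ℝ) (u v : V)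

noncomputable def pendantElim : ({x : V // x ≠ u ∧ x ≠ v} → ℝ) × ℝ × ℝ →ₗ[ℝ] V → ℝ where
  toFun z x :=
    if h : x ≠ u ∧ x ≠ v then z.1 ⟨x, h⟩
    else if x = u then z.2.1
    else z.2.2 - (∑ s, w u s.1 * z.1 s) / w u v
  map_add' z z' := by
    funext x
    simp only [Prod.fst_add, Prod.snd_add, Pi.add_apply, mul_add, Finset.sum_add_distrib]
    split_ifs <;> ring
  map_smul' c z := by
    funext x
    simp only [Prod.smul_fst, Prod.smul_snd, Pi.smul_apply, smul_eq_mul, RingHom.id_apply,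
      mul_left_comm _ c, ← Finset.mul_sum]
    split_ifs <;> ring

variable {w u v}

lemma pendantElim_apply_subtype (z : ({x : V // x ≠ u ∧ x ≠ v} → ℝ) × ℝ × ℝ)
    (s : {x : V // x ≠ u ∧ x ≠ v}) : pendantElim w u v z s = z.1 s :=
  dif_pos s.2

lemma pendantElim_apply_left (z : ({x : V // x ≠ u ∧ x ≠ v} → ℝ) × ℝ × ℝ) :
    pendantElim w u v z u = z.2.1 := by
  simp [pendantElim]

lemma pendantElim_apply_right (huv : u ≠ v) (z : ({x : V // x ≠ u ∧ x ≠ v} → ℝ) × ℝ × ℝ) :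
    pendantElim w u v z v = z.2.2 - (∑ s, w u s.1 * z.1 s) / w u v := by
  simp [pendantElim, huv.symm]

lemma pendantElim_injective (huv : u ≠ v) : Function.Injective (pendantElim w u v) := by
  refine (injective_iff_map_eq_zero _).mpr fun z hz => ?_
  have hy : z.1 = 0 := funext fun s => by rw [← pendantElim_apply_subtype (w := w) z s, hz]; rfl
  have hs : z.2.1 = 0 := by rw [← pendantElim_apply_left (w := w) z, hz]; rfl
  have ht := pendantElim_apply_right (w := w) huv z
  rw [hz, hy] at ht
  exact Prod.ext hy (Prod.ext hs (by simpa using ht.symm))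

lemma card_subtype_ne_and_ne_add_two (huv : u ≠ v) :
    Fintype.card {x : V // x ≠ u ∧ x ≠ v} + 2 = Fintype.card V := by
  have := Fintype.sum_eq_add_add_sum_subtype_ne_and_ne huv fun _ => 1
  simp only [Finset.sum_const, Finset.card_univ, smul_eq_mul, mul_one] at this
  omega

variable (w) in
noncomputable def pendantElimEquiv (huv : u ≠ v) :
    (({x : V // x ≠ u ∧ x ≠ v} → ℝ) × ℝ × ℝ) ≃ₗ[ℝ] (V → ℝ) :=
  LinearMap.linearEquivOfInjective (pendantElim w u v) (pendantElim_injective huv) <| by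
    simp only [Module.finrank_prod, Module.finrank_fintype_fun_eq_card, Module.finrank_self]
    rw [← card_subtype_ne_and_ne_add_two huv]

lemma quadForm_pendantElim (huv : u ≠ v) (hsymm : ∀ x y, w x y = w y x) (huu : w u u = 0)
    (hv : ∀ x, x ≠ u → w x v = 0) (ha : w u v ≠ 0)
    (z : ({x : V // x ≠ u ∧ x ≠ v} → ℝ) × ℝ × ℝ) :
    quadForm (of w) (pendantElim w u v z) =
      quadForm ((of w).submatrix Subtype.val Subtype.val) z.1 + 2 * w u v * z.2.1 * z.2.2 := by
  obtain ⟨y, s, t⟩ := z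
  have hxu := pendantElim_apply_left (w := w) (y, s, t)
  have hxv := pendantElim_apply_right (w := w) huv (y, s, t)
  have hxr := pendantElim_apply_subtype (w := w) (y, s, t)
  set x := pendantElim w u v (y, s, t)
  have hsplit := Fintype.sum_eq_add_add_sum_subtype_ne_and_ne (M := ℝ) huv
  have hrow_u : (of w *ᵥ x) u = w u v * t := by
    simp only [mulVec, dotProduct, of_apply]
    rw [hsplit, huu, hxv]
    simp only [hxr]
    field_simp
    ring
  have hrow_v : (of w *ᵥ x) v = w u v * s := by
    simp only [mulVec, dotProduct, of_apply]
    rw [hsplit, hv v huv.symm, hsymm v u, hxu,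
      Finset.sum_eq_zero fun r _ => by rw [hsymm, hv r r.2.1, zero_mul]]
    ring
  have hrow : ∀ r : {x : V // x ≠ u ∧ x ≠ v},
      (of w *ᵥ x) r = w u r * s + ((of w).submatrix Subtype.val Subtype.val *ᵥ y) r := by
    intro r
    simp only [mulVec, dotProduct, of_apply, submatrix_apply]
    rw [hsplit, hsymm r u, hv r r.2.1, hxu]
    simp only [hxr]
    ring
  simp only [quadForm, dotProduct]
  rw [hsplit, hrow_u, hrow_v, hxu, hxv]
  simp only [hxr, hrow, mul_add, Finset.sum_add_distrib]
  rw [show ∑ r, y r * (w u r * s) = s * ∑ r, w u r.1 * y r by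
    rw [Finset.mul_sum]; exact Finset.sum_congr rfl fun r _ => by ring]
  field_simp
  ring

theorem card_pos_mul_eigenvalues_eq_succ_of_pendant (hA : (of w).IsHermitian)
    (hB : ((of w).submatrix (Subtype.val : {x : V // x ≠ u ∧ x ≠ v} → V) Subtype.val).IsHermitian)
    (huv : u ≠ v) (huu : w u u = 0) (hv : ∀ x, x ≠ u → w x v = 0) (ha : w u v ≠ 0)
    (σ : ℝ) (hσ : σ ≠ 0) :
    Nat.card {i // 0 < σ * hA.eigenvalues i} = Nat.card {i // 0 < σ * hB.eigenvalues i} + 1 := by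
  have hsymm : ∀ x y, w x y = w y x := fun x y => by simpa using hA.apply y x
  refine ((isPositiveIndex_const_mul_quadForm hA σ).comp_linearEquiv
    (pendantElimEquiv w huv)).unique ?_
  convert (isPositiveIndex_const_mul_quadForm hB σ).prod
    (isPositiveIndex_hyperbolic (mul_ne_zero hσ (mul_ne_zero two_ne_zero ha))) (by simp) (by simp)
    using 1
  funext z
  simp only [Function.comp_apply, pendantElimEquiv, LinearMap.linearEquivOfInjective_apply,
    quadForm_pendantElim huv hsymm huu hv ha z]
  ring

end Pendant

/-- Deleting a pendant vertex `v` together with its unique neighbour `u`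
decreases both inertia indices by exactly one. -/
theorem stmt3 {V : Type*} [Fintype V] [DecidableEq V]
    (G : SimpleGraph V) (w : V → V → ℝ) (hw : IsWeighting G w)
    (u v : V) (huv : G.Adj u v) (hpend : ∀ x, G.Adj x v → x = u) :
    iPos (Matrix.of w) =
        iPos ((Matrix.of w).submatrix
          (fun i : {x : V // x ≠ u ∧ x ≠ v} => (i : V))
          (fun i : {x : V // x ≠ u ∧ x ≠ v} => (i : V))) + 1 ∧
      iNeg (Matrix.of w) =
        iNeg ((Matrix.of w).submatrix
          (fun i : {x : V // x ≠ u ∧ x ≠ v} => (i : V))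
          (fun i : {x : V // x ≠ u ∧ x ≠ v} => (i : V))) + 1 := by
  obtain ⟨hsymm, hpos, hzero⟩ := hw
  have hA := isHermitian_of_symmetric hsymm
  have hB := hA.submatrix (Subtype.val : {x : V // x ≠ u ∧ x ≠ v} → V)
  have key := card_pos_mul_eigenvalues_eq_succ_of_pendant hA hB (G.ne_of_adj huv)
    (hzero u u G.irrefl) (fun x hx => hzero x v (mt (hpend x) hx)) (hpos u v huv).ne'
  rw [iPos, iPos, iNeg, iNeg, dif_pos hA, dif_pos hA, dif_pos hB, dif_pos hB]
  exact ⟨by simpa using key 1 one_ne_zero, by simpa using key (-1) (by norm_num)⟩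
end

section
/- Let T be a weighted tree on n vertices that has a perfect matching. Then i₊(T) = i₋(T) = n/2; in particular, the weighted adjacency matrix of T is invertible. -/
/-- `M` is a matching of `G`: a set of edges of `G`, pairwise vertex-disjoint. -/
def IsMatchingSet {V : Type*} (G : SimpleGraph V) (M : Finset (Sym2 V)) : Prop :=
  (M : Set (Sym2 V)) ⊆ G.edgeSet ∧
    ∀ e ∈ M, ∀ f ∈ M, e ≠ f → ∀ v, v ∈ e → v ∉ f

/-- The matching number of `G`. -/
noncomputable def matchNum {V : Type*} (G : SimpleGraph V) : ℕ :=
  sSup {n | ∃ M : Finset (Sym2 V), IsMatchingSet G M ∧ M.card = n}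

/-- A vertex is matched in `G` if every maximum matching of `G` covers it. -/
def Matched {V : Type*} (G : SimpleGraph V) (v : V) : Prop :=
  ∀ M : Finset (Sym2 V), IsMatchingSet G M → M.card = matchNum G → ∃ e ∈ M, v ∈ e

/-! In the Leibniz expansion of `det A`, a permutation contributes only if it moves every vertex
to a neighbour. In a tree such a permutation is a fixed-point-free involution, so every nonzero
term is `(-1)^(n/2)` times a positive number, and the perfect matching supplies one such term:
`det A ≠ 0`, and `0` is not an eigenvalue. Conjugating by the diagonal signing
`v ↦ (-1)^dist(r, v)` turns `A` into `-A`, so the spectrum is symmetric about `0`, which forces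
`i₊ = i₋ = n/2`. -/

open Equiv Matrix Polynomial

lemma Equiv.Perm.sign_of_involutive_of_forall_ne {α : Type*} [Fintype α] [DecidableEq α]
    {σ : Perm α} (hinv : Function.Involutive σ) (hfree : ∀ a, σ a ≠ a) :
    Perm.sign σ = (-1) ^ (Fintype.card α / 2) := by
  have hfix : Fintype.card (Function.fixedPoints σ) = 0 :=
    Fintype.card_eq_zero_iff.mpr ⟨fun a => hfree a a.2⟩
  rw [Perm.sign_of_pow_two_eq_one (by ext a; simp [sq, hinv a]), hfix, Nat.sub_zero]

lemma Matrix.det_ne_zero_of_nonneg_of_sign_eq {n : Type*} [Fintype n] [DecidableEq n]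
    (A : Matrix n n ℝ) (hA : ∀ i j, 0 ≤ A i j) (s : ℤˣ)
    (hs : ∀ σ : Perm n, ∏ i, A (σ i) i ≠ 0 → Perm.sign σ = s)
    (h : ∃ σ : Perm n, ∏ i, A (σ i) i ≠ 0) : A.det ≠ 0 := by
  have hterm (σ : Perm n) : ((s : ℤ) : ℝ) * (Perm.sign σ • ∏ i, A (σ i) i) = ∏ i, A (σ i) i := by
    by_cases hσ : ∏ i, A (σ i) i = 0
    · simp [hσ]
    · rw [hs σ hσ, Units.smul_def, zsmul_eq_mul, ← mul_assoc, ← Int.cast_mul, ← Units.val_mul,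
        Int.units_mul_self, Units.val_one, Int.cast_one, one_mul]
  obtain ⟨σ₀, hσ₀⟩ := h
  have hpos : 0 < ((s : ℤ) : ℝ) * A.det := by
    rw [det_apply, Finset.mul_sum]
    simp_rw [hterm]
    exact Finset.sum_pos' (fun σ _ => Finset.prod_nonneg fun i _ => hA _ _)
      ⟨σ₀, Finset.mem_univ _, (Finset.prod_nonneg fun i _ => hA _ _).lt_of_ne' hσ₀⟩
  exact fun h0 => by simp [h0] at hpos

lemma Matrix.charpoly_neg_eq_of_even_add {n R : Type*} [Fintype n] [DecidableEq n] [CommRing R]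
    (A : Matrix n n R) (k : n → ℕ) (hA : ∀ i j, Even (k i + k j) → A i j = 0) :
    (-A).charpoly = A.charpoly := by
  set D : Matrix n n R := diagonal fun i => (-1) ^ k i
  have hDD : D * D = 1 := by
    rw [diagonal_mul_diagonal, ← diagonal_one]
    congr 1
    funext i
    rw [← pow_add, Even.neg_one_pow ⟨k i, rfl⟩]
  have hDAD : D * A * D = -A := by
    ext i j
    rw [mul_diagonal, diagonal_mul, neg_apply]
    rcases Nat.even_or_odd (k i + k j) with h | h
    · simp [hA i j h]
    · rw [mul_right_comm, ← pow_add, h.neg_one_pow, neg_one_mul]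
  rw [← hDAD, charpoly_mul_comm, ← mul_assoc, hDD, one_mul]

namespace Matrix.IsHermitian

variable {n 𝕜 : Type*} [Fintype n] [DecidableEq n] [RCLike 𝕜] {A : Matrix n n 𝕜}

lemma charpoly_neg (hA : A.IsHermitian) :
    (-A).charpoly = ∏ i, (X - C (-(hA.eigenvalues i : 𝕜))) := by
  conv_lhs => rw [hA.spectral_theorem, Unitary.conjStarAlgAut_apply, ← neg_mul, ← mul_neg,
    charpoly_mul_comm, ← mul_assoc]
  simp [charpoly_diagonal]

lemma card_pos_eigenvalues_eq_card_neg (hA : A.IsHermitian) (h : (-A).charpoly = A.charpoly) :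
    Fintype.card {i // 0 < hA.eigenvalues i} = Fintype.card {i // hA.eigenvalues i < 0} := by
  have hroots := congrArg Polynomial.roots h
  rw [hA.charpoly_neg, hA.roots_charpoly_eq_eigenvalues, Polynomial.roots_prod _ _
    (Finset.prod_ne_zero_iff.mpr fun i _ => X_sub_C_ne_zero _)] at hroots
  simp only [Polynomial.roots_X_sub_C, Multiset.bind_singleton, Function.comp_def] at hroots
  set m := Finset.univ.val.map hA.eigenvalues
  have hm : m.map Neg.neg = m := Multiset.map_injective RCLike.ofReal_injective <| by
    simpa [m, Multiset.map_map, Function.comp_def, RCLike.ofReal_neg] using hroots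
  have hcount (p : ℝ → Prop) [DecidablePred p] :
      Fintype.card {i // p (hA.eigenvalues i)} = m.countP p := by
    rw [Fintype.card_subtype, Multiset.countP_map]
    rfl
  rw [hcount (0 < ·), hcount (· < 0)]
  conv_lhs => rw [← hm]
  rw [Multiset.countP_map, ← Multiset.countP_eq_card_filter]
  simp only [Left.neg_pos_iff]

end Matrix.IsHermitian

lemma iPos_eq_and_iNeg_eq_of_charpoly_neg {n : Type*} [Fintype n] [DecidableEq n]
    {A : Matrix n n ℝ} (hA : A.IsHermitian) (hdet : A.det ≠ 0) (h : (-A).charpoly = A.charpoly) :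
    iPos A = Fintype.card n / 2 ∧ iNeg A = Fintype.card n / 2 := by
  have hpn := hA.card_pos_eigenvalues_eq_card_neg h
  have hne (i : n) : hA.eigenvalues i ≠ 0 := by
    rw [hA.det_eq_prod_eigenvalues] at hdet
    simpa using Finset.prod_ne_zero_iff.mp hdet i (Finset.mem_univ i)
  have hneg : Fintype.card {i // hA.eigenvalues i < 0}
      = Fintype.card {i // ¬0 < hA.eigenvalues i} :=
    Fintype.card_congr <| Equiv.subtypeEquivRight fun i =>
      ⟨fun hi => hi.not_gt, fun hi => (not_lt.mp hi).lt_of_ne (hne i)⟩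
  have hcompl := Fintype.card_subtype_compl (fun i => 0 < hA.eigenvalues i)
  have hle := Fintype.card_subtype_le (fun i => 0 < hA.eigenvalues i)
  simp only [iPos, iNeg, dif_pos hA, Nat.card_eq_fintype_card]
  omega

lemma IsMatchingSet.exists_perm_adj {V : Type*} {G : SimpleGraph V} {M : Finset (Sym2 V)}
    (hM : IsMatchingSet G M) (hcov : ∀ v, ∃ e ∈ M, v ∈ e) :
    ∃ σ : Perm V, ∀ v, G.Adj v (σ v) := by
  choose E hEM hvE using hcov
  choose f hf using fun v => Sym2.mem_iff_exists.mp (hvE v)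
  have hE : ∀ v, E (f v) = E v := fun v => by
    by_contra hne
    exact hM.2 _ (hEM (f v)) _ (hEM v) hne (f v) (hvE _) (hf v ▸ Sym2.mem_mk_right _ _)
  have hinv : Function.Involutive f := fun v => by
    have h := (hf (f v)).symm.trans ((hE v).trans (hf v))
    rw [Sym2.eq_swap] at h
    exact Sym2.congr_left.mp h
  exact ⟨hinv.toPerm f, fun v => G.mem_edgeSet.mp (hf v ▸ hM.1 (hEM v))⟩

lemma IsWeighting.nonneg {V : Type*} {G : SimpleGraph V} {w : V → V → ℝ} (hw : IsWeighting G w)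
    (u v : V) : 0 ≤ w u v := by
  by_cases h : G.Adj u v
  exacts [(hw.2.1 u v h).le, (hw.2.2 u v h).ge]

namespace SimpleGraph.IsTree

variable {V : Type*} {G : SimpleGraph V}

lemma exists_isPath_concat_of_dist_le (hG : G.IsTree) (r : V) {u x : V} (hadj : G.Adj u x)
    (hle : G.dist r u ≤ G.dist r x) :
    ∃ p : G.Walk r u, p.length = G.dist r u ∧ (p.concat hadj).IsPath := by
  classical
  obtain ⟨p, hp, hpl⟩ := hG.connected.exists_path_of_dist r u
  refine ⟨p, hpl, hp.concat (fun hx => ?_) hadj⟩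
  have h₁ : G.dist r x ≤ (p.takeUntil x hx).length := dist_le _
  have h₂ : (p.takeUntil x hx).length + (p.dropUntil x hx).length = p.length := by
    rw [← Walk.length_append, Walk.take_spec]
  have h₃ : (p.dropUntil x hx).length ≠ 0 := fun h => hadj.ne (Walk.eq_of_length_eq_zero h).symm
  omega

lemma dist_eq_add_one_of_adj_of_dist_le (hG : G.IsTree) (r : V) {u x : V} (hadj : G.Adj u x)
    (hle : G.dist r u ≤ G.dist r x) : G.dist r x = G.dist r u + 1 := by
  obtain ⟨p, hpl, hp⟩ := hG.exists_isPath_concat_of_dist_le r hadj hle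
  obtain ⟨q, hq, hql⟩ := hG.connected.exists_path_of_dist r x
  have hqp : q = p.concat hadj :=
    congrArg Subtype.val ((hG.isAcyclic.subsingleton_path r x).elim ⟨q, hq⟩ ⟨_, hp⟩)
  rw [← hql, hqp, Walk.length_concat, hpl]

lemma dist_eq_add_one_or_of_adj (hG : G.IsTree) (r : V) {u v : V} (hadj : G.Adj u v) :
    G.dist r v = G.dist r u + 1 ∨ G.dist r u = G.dist r v + 1 := by
  rcases le_total (G.dist r u) (G.dist r v) with h | h
  · exact .inl (hG.dist_eq_add_one_of_adj_of_dist_le r hadj h)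
  · exact .inr (hG.dist_eq_add_one_of_adj_of_dist_le r hadj.symm h)

lemma eq_of_adj_of_dist_le (hG : G.IsTree) (r : V) {u₁ u₂ x : V} (h₁ : G.Adj u₁ x)
    (h₂ : G.Adj u₂ x) (hle₁ : G.dist r u₁ ≤ G.dist r x) (hle₂ : G.dist r u₂ ≤ G.dist r x) :
    u₁ = u₂ := by
  obtain ⟨p₁, -, hp₁⟩ := hG.exists_isPath_concat_of_dist_le r h₁ hle₁
  obtain ⟨p₂, -, hp₂⟩ := hG.exists_isPath_concat_of_dist_le r h₂ hle₂
  exact (Walk.concat_inj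
    (congrArg Subtype.val ((hG.isAcyclic.subsingleton_path r x).elim ⟨_, hp₁⟩ ⟨_, hp₂⟩))).1

/-- A non-involutive vertex `x` farthest from the root has the two distinct non-involutive
neighbours `σ x` and `σ⁻¹ x`, both no farther from the root: two parents. -/
lemma involutive_of_forall_adj [Finite V] (hG : G.IsTree) (σ : Perm V)
    (hσ : ∀ v, G.Adj v (σ v)) : Function.Involutive σ := by
  classical
  have := Fintype.ofFinite V
  obtain ⟨r⟩ := hG.connected.nonempty
  by_contra hnot
  obtain ⟨x, hx, hmax⟩ := (Finset.univ.filter fun v => σ (σ v) ≠ v).exists_max_image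
    (G.dist r) (by simpa [Function.Involutive, Finset.Nonempty] using hnot)
  simp only [Finset.mem_filter, Finset.mem_univ, true_and] at hx hmax
  set y := σ.symm x
  have hy : σ y = x := σ.apply_symm_apply x
  have hxy : σ x = y := by
    refine hG.eq_of_adj_of_dist_le r (hσ x).symm (hy ▸ hσ y) (hmax _ ?_) (hmax _ ?_)
    · exact fun h => hx (σ.injective h)
    · exact fun h => hx (by rw [hy] at h; rw [h, hy])
  exact hx (by rw [hxy, hy])

lemma sign_eq_of_forall_adj [Fintype V] [DecidableEq V] (hG : G.IsTree) {σ : Perm V}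
    (hσ : ∀ v, G.Adj v (σ v)) : Perm.sign σ = (-1) ^ (Fintype.card V / 2) :=
  Perm.sign_of_involutive_of_forall_ne (hG.involutive_of_forall_adj σ hσ) fun v => (hσ v).ne'

lemma charpoly_neg_eq {R : Type*} [Fintype V] [DecidableEq V] [CommRing R] (hG : G.IsTree)
    {A : Matrix V V R} (hA : ∀ u v, ¬G.Adj u v → A u v = 0) : (-A).charpoly = A.charpoly := by
  obtain ⟨r⟩ := hG.connected.nonempty
  refine A.charpoly_neg_eq_of_even_add (G.dist r) fun u v heven => hA u v fun hadj => ?_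
  obtain ⟨c, hc⟩ := heven
  rcases hG.dist_eq_add_one_or_of_adj r hadj with h | h <;> omega

lemma det_ne_zero_of_isWeighting [Fintype V] [DecidableEq V] (hG : G.IsTree)
    {w : V → V → ℝ} (hw : IsWeighting G w) {σ : Perm V} (hσ : ∀ v, G.Adj v (σ v)) :
    (Matrix.of w).det ≠ 0 := by
  refine det_ne_zero_of_nonneg_of_sign_eq _ hw.nonneg _ (fun τ hτ => hG.sign_eq_of_forall_adj
    fun v => ?_) ⟨σ, Finset.prod_ne_zero_iff.mpr fun v _ => (hw.2.1 _ _ (hσ v).symm).ne'⟩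
  by_contra hadj
  exact Finset.prod_ne_zero_iff.mp hτ v (Finset.mem_univ v) (hw.2.2 _ _ fun h => hadj h.symm)

end SimpleGraph.IsTree

/-- A weighted tree with a perfect matching has `i₊ = i₋ = n/2`; in particular
its weighted adjacency matrix is invertible. -/
theorem stmt7 {V : Type*} [Fintype V] [DecidableEq V]
    (G : SimpleGraph V) (hG : G.IsTree) (w : V → V → ℝ) (hw : IsWeighting G w)
    (hpm : ∃ M : Finset (Sym2 V), IsMatchingSet G M ∧ ∀ v : V, ∃ e ∈ M, v ∈ e) :
    iPos (Matrix.of w) = Fintype.card V / 2 ∧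
      iNeg (Matrix.of w) = Fintype.card V / 2 ∧
      (Matrix.of w).det ≠ 0 := by
  obtain ⟨M, hM, hcov⟩ := hpm
  obtain ⟨σ, hσ⟩ := hM.exists_perm_adj hcov
  have hA : (Matrix.of w).IsHermitian := Matrix.IsHermitian.ext fun u v => hw.1 v u
  have hdet := hG.det_ne_zero_of_isWeighting hw hσ
  obtain ⟨hpos, hneg⟩ :=
    iPos_eq_and_iNeg_eq_of_charpoly_neg hA hdet (hG.charpoly_neg_eq hw.2.2)
  exact ⟨hpos, hneg, hdet⟩
end

section
/- Let Cₙ be a weighted cycle of order n with arbitrary positive edge weights. If n ≡ 1 (mod 4) then i₊(Cₙ) = (n+1)/2 and i₋(Cₙ) = (n−1)/2; if n ≡ 2 (mod 4) then i₊(Cₙ) = i₋(Cₙ) = n/2; if n ≡ 3 (mod 4) then i₊(Cₙ) = (n−1)/2 and i₋(Cₙ) = (n+1)/2. In all three cases the weighted adjacency matrix is invertible, regardless of the weights. -/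
open Matrix Finset Module

lemma finrank_le_card_of_forall_eq_zero {K V ι : Type*} [Field K] [AddCommGroup V] [Module K V]
    [Fintype ι] (f : ι → Dual K V) (hf : ∀ x, (∀ i, f i x = 0) → x = 0) :
    finrank K V ≤ Fintype.card ι := by
  have hinj : Function.Injective (LinearMap.pi f) := by
    rw [← LinearMap.ker_eq_bot, LinearMap.ker_eq_bot']
    exact fun x hx => hf x fun i => congrFun hx i
  simpa using LinearMap.finrank_le_finrank_of_injective hinj

section SignedSquares

variable {V W : Type*} [AddCommGroup V] [Module ℝ V] [AddCommGroup W] [Module ℝ W]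

def HasSignedSquares (Q : V → ℝ) (p q : ℕ) : Prop :=
  ∃ (f : Fin p → Dual ℝ V) (g : Fin q → Dual ℝ V),
    (∀ x, Q x = ∑ i, f i x ^ 2 - ∑ j, g j x ^ 2) ∧
    ∀ x, (∀ i, f i x = 0) → (∀ j, g j x = 0) → x = 0

lemma hasSignedSquares_sq : HasSignedSquares (fun x : Fin 1 → ℝ => x 0 ^ 2) 1 0 :=
  ⟨fun _ => LinearMap.proj 0, Fin.elim0, by simp, fun x hx _ => funext fun i => by
    fin_cases i; simpa using hx 0⟩

lemma hasSignedSquares_zero [Subsingleton W] :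
    HasSignedSquares (fun _ : W => (0 : ℝ)) 0 0 :=
  ⟨Fin.elim0, Fin.elim0, by simp, fun x _ _ => Subsingleton.elim x 0⟩

namespace HasSignedSquares

variable {Q : V → ℝ} {p q : ℕ}

lemma neg (h : HasSignedSquares Q p q) : HasSignedSquares (fun x => -Q x) q p := by
  obtain ⟨f, g, hQ, hker⟩ := h
  exact ⟨g, f, fun x => by simp only [hQ]; ring, fun x hg hf => hker x hf hg⟩

lemma const_mul (h : HasSignedSquares Q p q) {r : ℝ} (hr : 0 < r) :
    HasSignedSquares (fun x => r * Q x) p q := by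
  obtain ⟨f, g, hQ, hker⟩ := h
  have hs : √r ≠ 0 := (Real.sqrt_pos.2 hr).ne'
  refine ⟨fun i => √r • f i, fun j => √r • g j, fun x => ?_, fun x hf hg => ?_⟩
  · simp only [LinearMap.smul_apply, smul_eq_mul, mul_pow, Real.sq_sqrt hr.le, hQ,
      ← Finset.mul_sum, mul_sub]
  · exact hker x (fun i => by simpa [hs] using hf i) (fun j => by simpa [hs] using hg j)

lemma mul_add_comp {Q : W → ℝ} (h : HasSignedSquares Q p q) (u t : Dual ℝ V) (π : V →ₗ[ℝ] W)
    (hker : ∀ x, u x = 0 → t x = 0 → π x = 0 → x = 0) :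
    HasSignedSquares (fun x => u x * t x + Q (π x)) (p + 1) (q + 1) := by
  obtain ⟨f, g, hQ, hfg⟩ := h
  refine ⟨Fin.cons ((1 / 2 : ℝ) • (u + t)) fun i => (f i).comp π,
    Fin.cons ((1 / 2 : ℝ) • (u - t)) fun j => (g j).comp π, fun x => ?_, fun x hf hg => ?_⟩
  · simp only [Fin.sum_univ_succ, Fin.cons_zero, Fin.cons_succ, LinearMap.comp_apply,
      LinearMap.smul_apply, LinearMap.add_apply, LinearMap.sub_apply, smul_eq_mul, hQ]
    ring
  · have hu := hf 0
    have ht := hg 0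
    simp only [Fin.cons_zero, LinearMap.smul_apply, LinearMap.add_apply, LinearMap.sub_apply,
      smul_eq_mul] at hu ht
    refine hker x (by linarith) (by linarith) (hfg _ (fun i => ?_) (fun j => ?_))
    · simpa using hf i.succ
    · simpa using hg j.succ

lemma finrank_le_add_card_pos (h : HasSignedSquares Q p q) {κ : Type*} [Fintype κ]
    (lam : κ → ℝ) (y : κ → Dual ℝ V) (hy : ∀ x, Q x = ∑ k, lam k * y k x ^ 2) :
    finrank ℝ V ≤ q + #{k | 0 < lam k} := by
  obtain ⟨f, g, hQ, hker⟩ := h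
  have key := finrank_le_card_of_forall_eq_zero
    (Sum.elim g fun k : {k // 0 < lam k} => y k) fun x hx => ?_
  · simpa [Fintype.card_subtype] using key
  have hg : ∀ j, g j x = 0 := fun j => hx (.inl j)
  have hQx : Q x = ∑ i, f i x ^ 2 := by simp [hQ, hg]
  have hQ_nonpos : Q x ≤ 0 := by
    rw [hy]
    refine sum_nonpos fun k _ => ?_
    rcases lt_or_ge 0 (lam k) with hk | hk
    · simp [show y k x = 0 from hx (.inr ⟨k, hk⟩)]
    · exact mul_nonpos_of_nonpos_of_nonneg hk (sq_nonneg _)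
  have hf := (sum_eq_zero_iff_of_nonneg fun i _ => sq_nonneg (f i x)).1
    (le_antisymm (hQx ▸ hQ_nonpos) (by positivity))
  exact hker x (fun i => pow_eq_zero_iff two_ne_zero |>.1 (hf i (mem_univ i))) hg

end HasSignedSquares

end SignedSquares

namespace Matrix.IsHermitian

variable {ι : Type*} [Fintype ι] [DecidableEq ι] {A : Matrix ι ι ℝ}

lemma dotProduct_mulVec_eq_sum_eigenvalues (hA : A.IsHermitian) (x : ι → ℝ) :
    x ⬝ᵥ A *ᵥ x = ∑ i, hA.eigenvalues i *
      (star (hA.eigenvectorUnitary : Matrix ι ι ℝ) *ᵥ x) i ^ 2 := by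
  set U := (hA.eigenvectorUnitary : Matrix ι ι ℝ)
  have hspec : A = U * diagonal hA.eigenvalues * star U := by simpa using hA.spectral_theorem
  have hvec : x ᵥ* U = star U *ᵥ x := by
    rw [← vecMul_transpose, star_eq_conjTranspose, conjTranspose_eq_transpose_of_trivial,
      transpose_transpose]
  conv_lhs => rw [hspec, ← mulVec_mulVec, ← mulVec_mulVec, dotProduct_mulVec, hvec]
  simp only [dotProduct, mulVec_diagonal, sq]
  exact sum_congr rfl fun i _ => by ring

theorem iPos_eq_and_iNeg_eq_and_det_ne_zero (hA : A.IsHermitian) {p q : ℕ}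
    (h : HasSignedSquares (fun x => x ⬝ᵥ A *ᵥ x) p q) (hpq : p + q = Fintype.card ι) :
    iPos A = p ∧ iNeg A = q ∧ A.det ≠ 0 := by
  rw [iPos, iNeg, dif_pos hA, dif_pos hA, Nat.card_eq_fintype_card, Nat.card_eq_fintype_card,
    Fintype.card_subtype, Fintype.card_subtype, hA.det_eq_prod_eigenvalues]
  set lam := hA.eigenvalues
  let y : ι → Module.Dual ℝ (ι → ℝ) := fun k =>
    (LinearMap.proj k).comp (star (hA.eigenvectorUnitary : Matrix ι ι ℝ)).mulVecLin
  have hy : ∀ x, x ⬝ᵥ A *ᵥ x = ∑ k, lam k * y k x ^ 2 := hA.dotProduct_mulVec_eq_sum_eigenvalues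
  have hpos := h.finrank_le_add_card_pos lam y hy
  have hneg := h.neg.finrank_le_add_card_pos (fun k => -lam k) y
    fun x => by simp only [hy, neg_mul, sum_neg_distrib]
  simp only [Module.finrank_fintype_fun_eq_card, neg_pos] at hpos hneg
  have hdisj : Disjoint (univ.filter fun k => 0 < lam k) (univ.filter fun k => lam k < 0) :=
    disjoint_filter.2 fun _ _ h h' => lt_asymm h h'
  have hsum : #{k | 0 < lam k} + #{k | lam k < 0} ≤ Fintype.card ι := by
    rw [← card_union_of_disjoint hdisj]; exact card_le_univ _
  have hlam : ∀ k, lam k ≠ 0 := by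
    intro k hk
    have : #{k | 0 < lam k} + #{k | lam k < 0} ≤ #(univ.erase k) := by
      rw [← card_union_of_disjoint hdisj]
      refine card_le_card fun j hj => ?_
      simp only [mem_union, mem_filter, mem_univ, true_and] at hj
      exact mem_erase.2 ⟨by rintro rfl; simp [hk] at hj, mem_univ j⟩
    rw [card_erase_of_mem (mem_univ k), card_univ] at this
    have : 0 < Fintype.card ι := Fintype.card_pos_iff.2 ⟨k⟩
    omega
  refine ⟨by omega, by omega, ?_⟩
  exact prod_ne_zero_iff.2 fun k _ => by simpa using hlam k

end Matrix.IsHermitian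

/-- The closing weight `b` is kept apart from the path weights `c` because the reduction below
changes its sign. -/
def cycleForm {k : ℕ} (c : Fin k → ℝ) (b : ℝ) (x : Fin (k + 1) → ℝ) : ℝ :=
  ∑ i, c i * x i.castSucc * x i.succ + b * x 0 * x (Fin.last k)

lemma cycleForm_succ_succ_eq {k : ℕ} (c : Fin (k + 2) → ℝ) (b : ℝ) (hc : c 0 ≠ 0)
    (x : Fin (k + 3) → ℝ) :
    cycleForm c b x = (c 0 * x 1 + b * x (Fin.last _)) * (x 0 + c 1 / c 0 * x 2) +
      cycleForm (fun i => c i.succ.succ) (-(c 1 * b / c 0)) (fun j => x j.succ.succ) := by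
  simp only [cycleForm, Fin.sum_univ_succ, Fin.castSucc_zero,
    Fin.succ_zero_eq_one, Fin.succ_one_eq_two, Fin.castSucc_succ, Fin.succ_last]
  field_simp
  ring

lemma HasSignedSquares.cycleForm_succ_succ {k p q : ℕ} {c : Fin (k + 2) → ℝ} (hc : c 0 ≠ 0)
    {b : ℝ} (h : HasSignedSquares (cycleForm (fun i => c i.succ.succ) (-(c 1 * b / c 0))) p q) :
    HasSignedSquares (cycleForm c b) (p + 1) (q + 1) := by
  let u : Dual ℝ (Fin (k + 3) → ℝ) := c 0 • LinearMap.proj 1 + b • LinearMap.proj (Fin.last _)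
  let t : Dual ℝ (Fin (k + 3) → ℝ) := LinearMap.proj 0 + (c 1 / c 0) • LinearMap.proj 2
  let π : (Fin (k + 3) → ℝ) →ₗ[ℝ] (Fin (k + 1) → ℝ) :=
    LinearMap.funLeft ℝ ℝ fun j => j.succ.succ
  have := h.mul_add_comp u t π fun x hu ht hπ => by
    have hx : ∀ j : Fin (k + 1), x j.succ.succ = 0 := fun j => congrFun hπ j
    have hlast : x (Fin.last _) = 0 := hx (Fin.last k)
    have h2 : x 2 = 0 := hx 0
    simp only [u, t, LinearMap.add_apply, LinearMap.smul_apply, LinearMap.proj_apply,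
      smul_eq_mul, hlast, h2] at hu ht
    have h1 : x 1 = 0 := by simpa [hc] using hu
    have h0 : x 0 = 0 := by simpa using ht
    funext j
    exact Fin.cases h0 (fun j => Fin.cases h1 hx j) j
  convert this using 1
  funext x
  exact cycleForm_succ_succ_eq c b hc x

lemma neg_one_pow_mul_neg_mul_div (j : ℕ) {c₀ : ℝ} (hc₀ : c₀ ≠ 0) (c₁ b : ℝ) :
    (-1) ^ j * -(c₁ * b / c₀) = c₁ / c₀ * ((-1) ^ (j + 1) * b) := by
  field_simp
  ring

lemma hasSignedSquares_cycleForm_odd (j : ℕ) (c : Fin (2 * j) → ℝ) (hc : ∀ i, 0 < c i) (b : ℝ) :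
    (0 < (-1) ^ j * b → HasSignedSquares (cycleForm c b) (j + 1) j) ∧
    ((-1) ^ j * b < 0 → HasSignedSquares (cycleForm c b) j (j + 1)) := by
  induction j generalizing b with
  | zero =>
    have hQ : cycleForm c b = fun x => b * x 0 ^ 2 :=
      funext fun x => by simp [cycleForm, sq, mul_assoc]
    rw [pow_zero, one_mul, hQ]
    refine ⟨fun hb => hasSignedSquares_sq.const_mul hb, fun hb => ?_⟩
    simpa using (hasSignedSquares_sq.const_mul (neg_pos.2 hb)).neg
  | succ j ih =>
    have hc10 : 0 < c 1 / c 0 := div_pos (hc 1) (hc 0)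
    obtain ⟨ihpos, ihneg⟩ := ih (fun i => c i.succ.succ) (fun i => hc _) (-(c 1 * b / c 0))
    rw [neg_one_pow_mul_neg_mul_div j (hc 0).ne'] at ihpos ihneg
    exact ⟨fun hb => (ihpos (mul_pos hc10 hb)).cycleForm_succ_succ (hc 0).ne',
      fun hb => (ihneg (mul_neg_of_pos_of_neg hc10 hb)).cycleForm_succ_succ (hc 0).ne'⟩

lemma hasSignedSquares_cycleForm_even (j : ℕ) (c : Fin (2 * j + 1) → ℝ) (hc : ∀ i, 0 < c i)
    (b : ℝ) (hb : 0 < (-1) ^ j * b) : HasSignedSquares (cycleForm c b) (j + 1) (j + 1) := by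
  induction j generalizing b with
  | zero =>
    rw [pow_zero, one_mul] at hb
    have := hasSignedSquares_zero.mul_add_comp ((c 0 + b) • LinearMap.proj 1) (LinearMap.proj 0)
      (0 : (Fin 2 → ℝ) →ₗ[ℝ] (Fin 0 → ℝ)) fun x h1 h0 _ => by
        have h1 : x 1 = 0 := by simpa [(add_pos (hc 0) hb).ne'] using h1
        funext i; fin_cases i
        exacts [h0, h1]
    convert this using 1
    funext x
    simp only [cycleForm, Nat.mul_zero, Nat.reduceAdd, Fin.sum_univ_one, Fin.castSucc_zero,
      Fin.succ_zero_eq_one, Fin.reduceLast, LinearMap.smul_apply, LinearMap.proj_apply, smul_eq_mul,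
      add_zero]
    ring
  | succ j ih =>
    refine (ih (fun i => c i.succ.succ) (fun i => hc _) _ ?_).cycleForm_succ_succ (hc 0).ne'
    rw [neg_one_pow_mul_neg_mul_div j (hc 0).ne']
    exact mul_pos (div_pos (hc 1) (hc 0)) hb

lemma Fin.add_one_add_one_ne_self {n : ℕ} [NeZero n] (hn : 3 ≤ n) (i : Fin n) :
    i + 1 + 1 ≠ i := by
  rw [add_assoc, Ne, add_eq_left, Fin.ext_iff, Fin.val_add, Fin.val_one',
    Nat.mod_eq_of_lt (by omega : 1 < n), Fin.val_zero, Nat.mod_eq_of_lt (by omega)]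
  omega

section CycleMatrix

variable {n : ℕ} [NeZero n] {a : Fin n → ℝ} {A : Matrix (Fin n) (Fin n) ℝ}

lemma cycle_apply_eq_add (hn : 3 ≤ n)
    (hA : ∀ i j, A i j = if j = i + 1 then a i else if i = j + 1 then a j else 0) (i j : Fin n) :
    A i j = (if j = i + 1 then a i else 0) + (if i = j + 1 then a j else 0) := by
  rw [hA]
  split_ifs with h h'
  · exact absurd (h ▸ h').symm (Fin.add_one_add_one_ne_self hn i)
  all_goals simp

lemma isHermitian_of_cycle (hn : 3 ≤ n)
    (hA : ∀ i j, A i j = if j = i + 1 then a i else if i = j + 1 then a j else 0) :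
    A.IsHermitian := by
  ext i j
  simp only [conjTranspose_apply, star_trivial, cycle_apply_eq_add hn hA, add_comm]

lemma dotProduct_mulVec_cycle (hn : 3 ≤ n)
    (hA : ∀ i j, A i j = if j = i + 1 then a i else if i = j + 1 then a j else 0) (x : Fin n → ℝ) :
    x ⬝ᵥ A *ᵥ x = 2 * ∑ i, a i * x i * x (i + 1) := by
  have hfwd : ∑ i, ∑ j, x i * ((if j = i + 1 then a i else 0) * x j) =
      ∑ i, a i * x i * x (i + 1) :=
    sum_congr rfl fun i _ => by simp; ring
  have hbwd : ∑ i, ∑ j, x i * ((if i = j + 1 then a j else 0) * x j) =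
      ∑ i, a i * x i * x (i + 1) := by
    rw [sum_comm]
    exact sum_congr rfl fun j _ => by simp; ring
  rw [two_mul]
  simp only [dotProduct, mulVec, cycle_apply_eq_add hn hA, add_mul, mul_add, mul_sum,
    sum_add_distrib, hfwd, hbwd]

end CycleMatrix

lemma sum_mul_mul_add_one_eq_cycleForm {k : ℕ} (a x : Fin (k + 1) → ℝ) :
    ∑ i, a i * x i * x (i + 1) = cycleForm (fun i => a i.castSucc) (a (Fin.last k)) x := by
  simp only [Fin.sum_univ_castSucc, Fin.coeSucc_eq_succ, Fin.last_add_one, cycleForm]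
  ring

lemma hasSignedSquares_cycleForm {k : ℕ} (c : Fin k → ℝ) (hc : ∀ i, 0 < c i) {b : ℝ} (hb : 0 < b) :
    ((k + 1) % 4 = 1 → HasSignedSquares (cycleForm c b) ((k + 1 + 1) / 2) ((k + 1 - 1) / 2)) ∧
    ((k + 1) % 4 = 2 → HasSignedSquares (cycleForm c b) ((k + 1) / 2) ((k + 1) / 2)) ∧
    ((k + 1) % 4 = 3 → HasSignedSquares (cycleForm c b) ((k + 1 - 1) / 2) ((k + 1 + 1) / 2)) := by
  refine ⟨fun hk => ?_, fun hk => ?_, fun hk => ?_⟩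
  · obtain ⟨t, rfl⟩ : ∃ t, k = 2 * (2 * t) := ⟨k / 4, by omega⟩
    convert (hasSignedSquares_cycleForm_odd (2 * t) c hc b).1 (by simpa [pow_mul] using hb)
      using 1 <;> omega
  · obtain ⟨t, rfl⟩ : ∃ t, k = 2 * (2 * t) + 1 := ⟨k / 4, by omega⟩
    convert hasSignedSquares_cycleForm_even (2 * t) c hc b (by simpa [pow_mul] using hb)
      using 1 <;> omega
  · obtain ⟨t, rfl⟩ : ∃ t, k = 2 * (2 * t + 1) := ⟨k / 4, by omega⟩
    convert (hasSignedSquares_cycleForm_odd (2 * t + 1) c hc b).2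
      (by simpa [pow_succ, pow_mul] using hb) using 1 <;> omega

/-- Inertia of a weighted cycle of order `n ≢ 0 (mod 4)`, independent of the
positive weights; in all three cases the weighted adjacency matrix is invertible. -/
theorem stmt9 {n : ℕ} [NeZero n] (hn : 3 ≤ n)
    (a : Fin n → ℝ) (ha : ∀ i, 0 < a i)
    (A : Matrix (Fin n) (Fin n) ℝ)
    (hA : ∀ i j, A i j = if j = i + 1 then a i else if i = j + 1 then a j else 0) :
    (n % 4 = 1 → iPos A = (n + 1) / 2 ∧ iNeg A = (n - 1) / 2) ∧
    (n % 4 = 2 → iPos A = n / 2 ∧ iNeg A = n / 2) ∧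
    (n % 4 = 3 → iPos A = (n - 1) / 2 ∧ iNeg A = (n + 1) / 2) ∧
    (n % 4 ≠ 0 → A.det ≠ 0) := by
  obtain ⟨k, rfl⟩ : ∃ k, n = k + 1 := ⟨n - 1, by omega⟩
  set Q := cycleForm (fun i => a i.castSucc) (a (Fin.last k))
  have hQ : ∀ x, x ⬝ᵥ A *ᵥ x = 2 * Q x := fun x => by
    rw [dotProduct_mulVec_cycle hn hA, sum_mul_mul_add_one_eq_cycleForm]
  have inertia : ∀ {p q}, HasSignedSquares Q p q → p + q = k + 1 →
      iPos A = p ∧ iNeg A = q ∧ A.det ≠ 0 := fun h hpq =>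
    (isHermitian_of_cycle hn hA).iPos_eq_and_iNeg_eq_and_det_ne_zero
      (by simpa only [hQ] using h.const_mul two_pos) (by simpa using hpq)
  obtain ⟨h1, h2, h3⟩ := hasSignedSquares_cycleForm _ (fun i => ha _) (ha (Fin.last k))
  refine ⟨fun hk => (inertia (h1 hk) (by omega)).imp_right And.left,
    fun hk => (inertia (h2 hk) (by omega)).imp_right And.left,
    fun hk => (inertia (h3 hk) (by omega)).imp_right And.left, fun hk => ?_⟩
  obtain hk | hk | hk : (k + 1) % 4 = 1 ∨ (k + 1) % 4 = 2 ∨ (k + 1) % 4 = 3 := by omega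
  exacts [(inertia (h1 hk) (by omega)).2.2, (inertia (h2 hk) (by omega)).2.2,
    (inertia (h3 hk) (by omega)).2.2]
end

section
/- Let T be a tree and v a mismatched vertex of T. Then every neighbor u of v is matched in T, and moreover u is matched in the component of T − v containing u. -/
attribute [local instance] Classical.propDecidable

/-!
Let `A` be the vertex set of the component `C` of `T - v` containing `u`. As `T` is a tree, `u`
is the only neighbour of `v` in `A`, so an edge of `T` lies inside `A`, avoids `A`, or is `uv`;
and the matchings of `C` are the matchings of `T` inside `A`.

Fix a maximum matching `M` of `T` missing `v`; it has at most `ν(C)` edges inside `A`. If a maximum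
matching `K` of `C` missed `u`, then `K`, `uv` and the edges of `M` avoiding `A` would form a
matching of `T` larger than `M`. Hence `u` is matched in `C`. If a maximum matching `M'` of `T`
missed `u`, its edges inside `A` would form a matching of `C` missing `u`, hence have fewer than
`ν(C)` edges, and replacing them by a maximum matching of `C` would enlarge `M'`.
-/

open SimpleGraph

section Matching

variable {V : Type*} {G : SimpleGraph V} {M N : Finset (Sym2 V)}

lemma isMatchingSet_empty : IsMatchingSet G ∅ := ⟨by simp, by simp⟩

lemma IsMatchingSet.mono (hM : IsMatchingSet G M) (hNM : N ⊆ M) : IsMatchingSet G N :=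
  ⟨fun _ he => hM.1 (hNM he), fun e he f hf => hM.2 e (hNM he) f (hNM hf)⟩

lemma IsMatchingSet.union (hM : IsMatchingSet G M) (hN : IsMatchingSet G N)
    (hMN : ∀ e ∈ M, ∀ f ∈ N, ∀ x ∈ e, x ∉ f) : IsMatchingSet G (M ∪ N) := by
  refine ⟨by simpa using ⟨hM.1, hN.1⟩, fun e he f hf hef x hxe hxf => ?_⟩
  rcases Finset.mem_union.1 he with he | he <;> rcases Finset.mem_union.1 hf with hf | hf
  · exact hM.2 e he f hf hef x hxe hxf
  · exact hMN e he f hf x hxe hxf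
  · exact hMN f hf e he x hxf hxe
  · exact hN.2 e he f hf hef x hxe hxf

lemma card_union_of_forall_notMem (hMN : ∀ e ∈ M, ∀ f ∈ N, ∀ x ∈ e, x ∉ f) :
    (M ∪ N).card = M.card + N.card :=
  Finset.card_union_of_disjoint <| Finset.disjoint_left.2 fun e hM hN =>
    hMN e hM e hN _ (Sym2.out_fst_mem e) (Sym2.out_fst_mem e)

lemma IsMatchingSet.insert {a b : V} (hM : IsMatchingSet G M) (hab : G.Adj a b)
    (ha : ∀ e ∈ M, a ∉ e) (hb : ∀ e ∈ M, b ∉ e) : IsMatchingSet G (insert s(a, b) M) := by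
  rw [Finset.insert_eq]
  refine IsMatchingSet.union ⟨by simpa using hab, by simp⟩ hM fun e he f hf x hxe hxf => ?_
  rw [Finset.mem_singleton.1 he, Sym2.mem_iff] at hxe
  rcases hxe with rfl | rfl
  exacts [ha f hf hxf, hb f hf hxf]

lemma exists_isMatchingSet_forall_notMem_of_not_matched {v : V} (hv : ¬ Matched G v) :
    ∃ M, IsMatchingSet G M ∧ M.card = matchNum G ∧ ∀ e ∈ M, v ∉ e := by
  simpa [Matched] using hv

variable [Finite V]

lemma bddAbove_card_isMatchingSet :
    BddAbove {n | ∃ M : Finset (Sym2 V), IsMatchingSet G M ∧ M.card = n} := by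
  have := Fintype.ofFinite V
  exact ⟨Fintype.card (Sym2 V), by rintro _ ⟨M, -, rfl⟩; exact M.card_le_univ⟩

lemma IsMatchingSet.card_le_matchNum (hM : IsMatchingSet G M) : M.card ≤ matchNum G :=
  le_csSup bddAbove_card_isMatchingSet ⟨M, hM, rfl⟩

lemma exists_isMatchingSet_card_eq_matchNum :
    ∃ M, IsMatchingSet G M ∧ M.card = matchNum G :=
  Nat.sSup_mem (s := {n | ∃ M : Finset (Sym2 V), IsMatchingSet G M ∧ M.card = n})
    ⟨0, ∅, isMatchingSet_empty, rfl⟩ bddAbove_card_isMatchingSet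

lemma card_add_card_le_matchNum (hM : IsMatchingSet G M) (hN : IsMatchingSet G N)
    (hMN : ∀ e ∈ M, ∀ f ∈ N, ∀ x ∈ e, x ∉ f) : M.card + N.card ≤ matchNum G :=
  card_union_of_forall_notMem hMN ▸ (hM.union hN hMN).card_le_matchNum

end Matching

section Embedding

variable {V W : Type*} {G : SimpleGraph V} {H : SimpleGraph W} (φ : H ↪g G)

lemma IsMatchingSet.map {N : Finset (Sym2 W)} (hN : IsMatchingSet H N) :
    IsMatchingSet G (N.map φ.toEmbedding.sym2Map) := by
  refine ⟨?_, ?_⟩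
  · simp only [Finset.coe_map, Set.image_subset_iff]
    exact fun e he => φ.toHom.map_mem_edgeSet (hN.1 he)
  · simp only [Finset.mem_map, Function.Embedding.sym2Map_apply]
    rintro _ ⟨e, he, rfl⟩ _ ⟨f, hf, rfl⟩ hef x hxe hxf
    obtain ⟨a, ha, rfl⟩ := Sym2.mem_map.1 hxe
    obtain ⟨b, hb, hba⟩ := Sym2.mem_map.1 hxf
    cases φ.injective hba
    exact hN.2 e he f hf (fun h => hef (h ▸ rfl)) a ha hb

lemma map_sym2Map_subset_sym2_range (N : Finset (Sym2 W)) :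
    ↑(N.map φ.toEmbedding.sym2Map) ⊆ (Set.range φ).sym2 := by
  rw [← Set.image_univ, Set.sym2_image]
  simp

lemma IsMatchingSet.exists_map_eq {M : Finset (Sym2 V)} (hM : IsMatchingSet G M)
    (hMφ : ↑M ⊆ (Set.range φ).sym2) :
    ∃ N, IsMatchingSet H N ∧ N.map φ.toEmbedding.sym2Map = M := by
  have hMrange : ↑M ⊆ Set.range (Sym2.map φ) := by
    simpa [← Set.image_univ, Set.sym2_image] using hMφ
  set N := M.preimage (Sym2.map φ) (Sym2.map.injective φ.injective).injOn
  have hNM : N.map φ.toEmbedding.sym2Map = M := by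
    rw [Finset.map_eq_image]
    change N.image (Sym2.map φ) = M
    rw [Finset.image_preimage, Finset.filter_true_of_mem fun e he => hMrange he]
  refine ⟨N, ⟨fun e he => ?_, fun e he f hf hef x hxe hxf => ?_⟩, hNM⟩
  · rw [Finset.mem_coe, Finset.mem_preimage] at he
    exact (φ.map_mem_edgeSet_iff).1 (hM.1 he)
  · rw [Finset.mem_preimage] at he hf
    exact hM.2 _ he _ hf ((Sym2.map.injective φ.injective).ne hef) (φ x)
      (Sym2.mem_map.2 ⟨x, hxe, rfl⟩) (Sym2.mem_map.2 ⟨x, hxf, rfl⟩)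

lemma matched_iff_of_embedding {w : W} :
    Matched H w ↔ ∀ M, IsMatchingSet G M → ↑M ⊆ (Set.range φ).sym2 →
      M.card = matchNum H → ∃ e ∈ M, φ w ∈ e := by
  constructor
  · rintro hw M hM hMφ hMc
    obtain ⟨N, hN, rfl⟩ := hM.exists_map_eq φ hMφ
    obtain ⟨e, he, hwe⟩ := hw N hN ((Finset.card_map _).symm.trans hMc)
    exact ⟨_, Finset.mem_map_of_mem _ he, Sym2.mem_map.2 ⟨w, hwe, rfl⟩⟩
  · rintro hw N hN hNc
    obtain ⟨_, hφe, hwe⟩ := hw _ (hN.map φ) (map_sym2Map_subset_sym2_range φ N)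
      ((Finset.card_map _).trans hNc)
    obtain ⟨e, he, rfl⟩ := Finset.mem_map.1 hφe
    obtain ⟨a, ha, haw⟩ := Sym2.mem_map.1 hwe
    exact ⟨e, he, φ.injective haw ▸ ha⟩

variable [Finite W]

lemma card_le_matchNum_of_subset_sym2_range {M : Finset (Sym2 V)} (hM : IsMatchingSet G M)
    (hMφ : ↑M ⊆ (Set.range φ).sym2) : M.card ≤ matchNum H := by
  obtain ⟨N, hN, rfl⟩ := hM.exists_map_eq φ hMφ
  exact (Finset.card_map _).trans_le hN.card_le_matchNum

lemma exists_isMatchingSet_subset_sym2_range_card_eq :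
    ∃ M, IsMatchingSet G M ∧ ↑M ⊆ (Set.range φ).sym2 ∧ M.card = matchNum H := by
  obtain ⟨N, hN, hNc⟩ := exists_isMatchingSet_card_eq_matchNum (G := H)
  exact ⟨_, hN.map φ, map_sym2Map_subset_sym2_range φ N, (Finset.card_map _).trans hNc⟩

end Embedding

lemma mem_sym2_or_mem_compl_sym2 {V : Type*} {G : SimpleGraph V} {v : V} {A : Set V}
    (hA : ∀ x y, G.Adj x y → x ∈ A → y ∉ A → y = v) {e : Sym2 V} (he : e ∈ G.edgeSet) :
    e ∈ A.sym2 ∨ e ∈ Aᶜ.sym2 ∨ ∃ x ∈ A, G.Adj x v ∧ e = s(x, v) := by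
  induction e using Sym2.inductionOn with
  | hf x y =>
  by_cases hx : x ∈ A <;> by_cases hy : y ∈ A
  · exact .inl ⟨hx, hy⟩
  · obtain rfl := hA x y he hx hy
    exact .inr (.inr ⟨x, hx, he, rfl⟩)
  · obtain rfl := hA y x (G.adj_symm he) hy hx
    exact .inr (.inr ⟨y, hy, G.adj_symm he, Sym2.eq_swap⟩)
  · exact .inr (.inl ⟨hx, hy⟩)

section Exchange

variable {V W : Type*} [Finite V] [Finite W] {G : SimpleGraph V} {H : SimpleGraph W}
  (φ : H ↪g G) {v : V} (hφ : ∀ x y, G.Adj x y → x ∈ Set.range φ → y ∉ Set.range φ → y = v)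
include hφ

theorem matched_of_adj_of_not_matched (hvφ : v ∉ Set.range φ) (hv : ¬ Matched G v) {w : W}
    (hadj : G.Adj (φ w) v) : Matched H w := by
  rw [matched_iff_of_embedding φ]
  intro K hK hKφ hKc
  by_contra! hwK
  obtain ⟨M, hM, hMc, hvM⟩ := exists_isMatchingSet_forall_notMem_of_not_matched hv
  set A := Set.range φ
  have hin : (M.filter (· ∈ A.sym2)).card ≤ matchNum H :=
    card_le_matchNum_of_subset_sym2_range φ (hM.mono (Finset.filter_subset _ _))
      fun e he => (Finset.mem_filter.1 he).2
  set Mout := M.filter (· ∉ A.sym2)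
  have hout : ∀ e ∈ Mout, e ∈ Aᶜ.sym2 := by
    intro e he
    rw [Finset.mem_filter] at he
    obtain h | h | ⟨x, -, -, rfl⟩ := mem_sym2_or_mem_compl_sym2 hφ (hM.1 he.1)
    exacts [absurd h he.2, h, absurd (Sym2.mem_mk_right x v) (hvM _ he.1)]
  have hwMout : ∀ e ∈ Mout, φ w ∉ e := fun e he hwe =>
    Set.mem_sym2_iff_subset.1 (hout e he) hwe ⟨w, rfl⟩
  have hins : IsMatchingSet G (insert s(φ w, v) Mout) :=
    (hM.mono (Finset.filter_subset _ _)).insert hadj hwMout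
      fun e he => hvM e (Finset.filter_subset _ _ he)
  have hsum := card_add_card_le_matchNum hins hK fun e he f hf x hxe hxf => by
    have hxA : x ∈ A := Set.mem_sym2_iff_subset.1 (hKφ hf) hxf
    rcases Finset.mem_insert.1 he with rfl | he
    · rcases Sym2.mem_iff.1 hxe with rfl | rfl
      exacts [hwK f hf hxf, hvφ hxA]
    · exact Set.mem_sym2_iff_subset.1 (hout e he) hxe hxA
  rw [Finset.card_insert_of_notMem fun h => hwMout _ h (Sym2.mem_mk_left _ _)] at hsum
  have hsplit : (M.filter (· ∈ A.sym2)).card + Mout.card = M.card :=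
    Finset.card_filter_add_card_filter_not _
  omega

theorem matched_of_matched_of_forall_adj_eq {w : W} (hw : Matched H w)
    (hwv : ∀ x ∈ Set.range φ, G.Adj x v → x = φ w) : Matched G (φ w) := by
  intro M hM hMc
  by_contra! hwM
  set A := Set.range φ
  set Min := M.filter (· ∈ A.sym2)
  set Mout := M.filter (· ∉ A.sym2)
  have hMin : IsMatchingSet G Min := hM.mono (Finset.filter_subset _ _)
  have hMinφ : ↑Min ⊆ A.sym2 := fun e he => (Finset.mem_filter.1 he).2
  have hout : ∀ e ∈ Mout, e ∈ Aᶜ.sym2 := by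
    intro e he
    rw [Finset.mem_filter] at he
    obtain h | h | ⟨x, hx, hxv, rfl⟩ := mem_sym2_or_mem_compl_sym2 hφ (hM.1 he.1)
    exacts [absurd h he.2, h, absurd (hwv x hx hxv ▸ Sym2.mem_mk_left x v) (hwM _ he.1)]
  have hin : Min.card < matchNum H := by
    refine (card_le_matchNum_of_subset_sym2_range φ hMin hMinφ).lt_of_ne fun h => ?_
    obtain ⟨e, he, hwe⟩ := (matched_iff_of_embedding φ).1 hw Min hMin hMinφ h
    exact hwM e (Finset.filter_subset _ _ he) hwe
  obtain ⟨K, hK, hKφ, hKc⟩ := exists_isMatchingSet_subset_sym2_range_card_eq φ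
  have hsum := card_add_card_le_matchNum (M := Mout) (hM.mono (Finset.filter_subset _ _)) hK
    fun e he f hf x hxe hxf =>
      Set.mem_sym2_iff_subset.1 (hout e he) hxe (Set.mem_sym2_iff_subset.1 (hKφ hf) hxf)
  have hsplit : Min.card + Mout.card = M.card := Finset.card_filter_add_card_filter_not _
  omega

end Exchange

lemma SimpleGraph.IsAcyclic.eq_of_adj_of_reachable_induce {V : Type*} {G : SimpleGraph V}
    (hG : G.IsAcyclic) {v w₁ w₂ : V} (h₁ : G.Adj v w₁) (h₂ : G.Adj v w₂)
    (hr : (G.induce {x | x ≠ v}).Reachable ⟨w₁, h₁.ne'⟩ ⟨w₂, h₂.ne'⟩) : w₁ = w₂ := by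
  obtain ⟨p⟩ := hr
  set q := p.map (Embedding.induce _).toHom
  have hvq : v ∉ q.support := by
    rw [Walk.support_map, List.mem_map]
    rintro ⟨x, -, hx⟩
    exact x.2 hx
  have hbridge := isBridge_iff_forall_walk_mem_edges.1
    (isAcyclic_iff_forall_adj_isBridge.1 hG h₂) (.cons h₁ q)
  change s(v, w₂) ∈ s(v, w₁) :: q.edges at hbridge
  rcases List.mem_cons.1 hbridge with h | h
  · exact (Sym2.congr_right.1 h).symm
  · exact absurd (q.fst_mem_support_of_mem_edges h) hvq

section Component

variable {V : Type*} (G : SimpleGraph V) (v : V) (c : (G.induce {x | x ≠ v}).ConnectedComponent)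

def inducedComponentEmbedding : (G.induce {x | x ≠ v}).induce c.supp ↪g G :=
  (Embedding.induce _).comp (Embedding.induce c.supp)

variable {G v c}

lemma notMem_range_inducedComponentEmbedding : v ∉ Set.range (inducedComponentEmbedding G v c) :=
  fun ⟨x, hx⟩ => x.1.2 hx

lemma eq_of_adj_of_mem_range_inducedComponentEmbedding {x y : V} (hxy : G.Adj x y)
    (hx : x ∈ Set.range (inducedComponentEmbedding G v c))
    (hy : y ∉ Set.range (inducedComponentEmbedding G v c)) : y = v := by
  by_contra hyv
  obtain ⟨⟨x, hxc⟩, rfl⟩ := hx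
  have hmk : (G.induce {x | x ≠ v}).connectedComponentMk ⟨y, hyv⟩ = c :=
    (ConnectedComponent.connectedComponentMk_eq_of_adj (G := G.induce _)
      (v := x) (w := ⟨y, hyv⟩) hxy).symm.trans hxc
  exact hy ⟨⟨⟨y, hyv⟩, hmk⟩, rfl⟩

lemma SimpleGraph.IsAcyclic.eq_of_adj_of_mem_range_inducedComponentEmbedding
    (hG : G.IsAcyclic) {x y : V} (hvx : G.Adj v x) (hvy : G.Adj v y)
    (hx : x ∈ Set.range (inducedComponentEmbedding G v c))
    (hy : y ∈ Set.range (inducedComponentEmbedding G v c)) : x = y := by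
  obtain ⟨⟨x, hxc⟩, rfl⟩ := hx
  obtain ⟨⟨y, hyc⟩, rfl⟩ := hy
  exact hG.eq_of_adj_of_reachable_induce hvx hvy
    (ConnectedComponent.exact (hxc.trans hyc.symm))

end Component

theorem stmt12_general {V : Type*} [Fintype V]
    (T : SimpleGraph V) (hT : T.IsTree) (v : V) (hv : ¬ Matched T v)
    (u : V) (hadj : T.Adj u v) :
    Matched T u ∧
      Matched
        ((T.induce {x | x ≠ v}).induce
          ((T.induce {x | x ≠ v}).connectedComponentMk ⟨u, hadj.ne⟩).supp)
        ⟨⟨u, hadj.ne⟩, rfl⟩ := by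
  set c := (T.induce {x | x ≠ v}).connectedComponentMk ⟨u, hadj.ne⟩
  set φ := inducedComponentEmbedding T v c
  have hφ : ∀ x y, T.Adj x y → x ∈ Set.range φ → y ∉ Set.range φ → y = v :=
    fun _ _ => eq_of_adj_of_mem_range_inducedComponentEmbedding
  have hu : Matched ((T.induce {x | x ≠ v}).induce c.supp) ⟨⟨u, hadj.ne⟩, rfl⟩ :=
    matched_of_adj_of_not_matched φ hφ notMem_range_inducedComponentEmbedding hv hadj
  refine ⟨matched_of_matched_of_forall_adj_eq φ hφ hu fun x hx hxv => ?_, hu⟩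
  exact hT.isAcyclic.eq_of_adj_of_mem_range_inducedComponentEmbedding hxv.symm hadj.symm hx
    (Set.mem_range_self _)

/-- If `v` is mismatched in a tree `T`, then every neighbour `u` of `v` is matched
in `T`, and also matched in the connected component of `T - v` containing `u`. -/
theorem stmt12 {V : Type*} [Fintype V] [DecidableEq V]
    (T : SimpleGraph V) (hT : T.IsTree) (v : V) (hv : ¬ Matched T v)
    (u : V) (hadj : T.Adj u v) :
    Matched T u ∧
      Matched
        ((T.induce {x | x ≠ v}).induce
          ((T.induce {x | x ≠ v}).connectedComponentMk ⟨u, hadj.ne⟩).supp)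
        ⟨⟨u, hadj.ne⟩, rfl⟩ :=
  stmt12_general T hT v hv u hadj
end

section
/- Let G be a weighted graph containing a 6-cycle C₆ attached to the rest of the graph only at a vertex u of C₆: precisely, let C₆(u)⊙ᵏG be obtained from a disjoint weighted 6-cycle C₆ and a weighted graph G of order n by joining u to k vertices of G with positive weights (1 ≤ k ≤ n). Then i₊(C₆(u)⊙ᵏG) = 3 + i₊(G) and i₋(C₆(u)⊙ᵏG) = 3 + i₋(G), independent of all edge weights. -/
/-!
Both inertia indices are invariant under congruence `M ↦ Pᵀ M P` (Sylvester's law of inertia).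
If `A z = e_u` with `z_u = 0` (for invertible `A` this says `(A⁻¹)_{uu} = 0`), the congruence by
`[[1, -z rᵀ], [0, 1]]` clears every edge `u b` of weight `r_b`, so the joined graph has the inertia
of the disjoint union. For a weighted `C₆` such a `z` exists at `u = 0`, and `C₆` itself has
inertia `(3, 3)`: it is nonsingular, its determinant being `-(a₀a₂a₄ + a₁a₃a₅)²`, and bipartite,
so the sign change `diag(±1)` makes it congruent to its negative.
-/

open Matrix QuadraticForm QuadraticMap

namespace Matrix

variable {n : Type*} [Fintype n] [DecidableEq n]

lemma toQuadraticForm'_apply (M : Matrix n n ℝ) (x : n → ℝ) :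
    M.toQuadraticForm' x = x ⬝ᵥ (M *ᵥ x) := by
  simp [toQuadraticForm', toLinearMap₂'_apply']

lemma toQuadraticForm'_diagonal (w : n → ℝ) :
    (diagonal w).toQuadraticForm' = weightedSumSquares ℝ w := by
  ext x
  simp only [toQuadraticForm'_apply, weightedSumSquares_apply, dotProduct, mulVec_diagonal,
    smul_eq_mul]
  exact Finset.sum_congr rfl fun i _ => by ring

lemma equivalent_toQuadraticForm'_transpose_mul_mul (M : Matrix n n ℝ) {P : Matrix n n ℝ}
    (hP : IsUnit P.det) : (Pᵀ * M * P).toQuadraticForm'.Equivalent M.toQuadraticForm' := by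
  let := invertibleOfIsUnitDet P hP
  refine ⟨{ toLinearEquiv := toLinearEquiv' P this, map_app' := fun x => ?_ }⟩
  simp [toQuadraticForm'_apply, ← mulVec_mulVec, dotProduct_mulVec, vecMul_transpose]

lemma IsHermitian.transpose_eigenvectorUnitary_mul_mul {M : Matrix n n ℝ} (hM : M.IsHermitian) :
    (hM.eigenvectorUnitary : Matrix n n ℝ)ᵀ * M * hM.eigenvectorUnitary =
      diagonal hM.eigenvalues := by
  simpa [← conjTranspose_eq_transpose_of_trivial, ← star_eq_conjTranspose,
    RCLike.ofReal_real_eq_id] using hM.conjStarAlgAut_star_eigenvectorUnitary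

lemma IsHermitian.equivalent_weightedSumSquares {M : Matrix n n ℝ} (hM : M.IsHermitian) :
    M.toQuadraticForm'.Equivalent (weightedSumSquares ℝ hM.eigenvalues) := by
  rw [← toQuadraticForm'_diagonal, ← hM.transpose_eigenvectorUnitary_mul_mul]
  exact (equivalent_toQuadraticForm'_transpose_mul_mul M (UnitaryGroup.det_isUnit _)).symm

end Matrix

open Matrix

section

variable {m n : Type*} [Fintype m] [DecidableEq m] [Fintype n] [DecidableEq n]

lemma iPos_eq_sigPos {M : Matrix n n ℝ} (hM : M.IsHermitian) :
    iPos M = sigPos M.toQuadraticForm' := by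
  rw [iPos, dif_pos hM, sigPos_of_equiv_weightedSumSquares hM.equivalent_weightedSumSquares]
  rfl

lemma iNeg_eq_sigNeg {M : Matrix n n ℝ} (hM : M.IsHermitian) :
    iNeg M = sigNeg M.toQuadraticForm' := by
  rw [iNeg, dif_pos hM, sigNeg_of_equiv_weightedSumSquares hM.equivalent_weightedSumSquares]
  rfl

lemma iNeg_eq_iPos_neg {M : Matrix n n ℝ} (hM : M.IsHermitian) : iNeg M = iPos (-M) := by
  rw [iNeg_eq_sigNeg hM, iPos_eq_sigPos hM.neg, ← sigPos_neg]
  congr 1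
  ext x
  simp [toQuadraticForm'_apply, neg_mulVec]

lemma iPos_transpose_mul_mul {M : Matrix n n ℝ} (hM : M.IsHermitian) {P : Matrix n n ℝ}
    (hP : IsUnit P.det) : iPos (Pᵀ * M * P) = iPos M := by
  have hPMP : (Pᵀ * M * P).IsHermitian := by
    simpa using isHermitian_conjTranspose_mul_mul P hM
  rw [iPos_eq_sigPos hM, iPos_eq_sigPos hPMP,
    (equivalent_toQuadraticForm'_transpose_mul_mul M hP).sigPos_eq]

lemma iPos_diagonal (w : n → ℝ) : iPos (diagonal w) = Nat.card {i // 0 < w i} := by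
  rw [iPos_eq_sigPos (isHermitian_diagonal w), toQuadraticForm'_diagonal,
    sigPos_weightedSumSquares]
  rfl

lemma iPos_fromBlocks_zero {A : Matrix m m ℝ} (hA : A.IsHermitian) {D : Matrix n n ℝ}
    (hD : D.IsHermitian) : iPos (fromBlocks A 0 0 D) = iPos A + iPos D := by
  set UA : Matrix m m ℝ := (hA.eigenvectorUnitary : Matrix m m ℝ)
  set UD : Matrix n n ℝ := (hD.eigenvectorUnitary : Matrix n n ℝ)
  have hdiag : (fromBlocks UA 0 0 UD)ᵀ * fromBlocks A 0 0 D * fromBlocks UA 0 0 UD =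
      diagonal (Sum.elim hA.eigenvalues hD.eigenvalues) := by
    simp [UA, UD, fromBlocks_transpose, fromBlocks_multiply,
      hA.transpose_eigenvectorUnitary_mul_mul, hD.transpose_eigenvectorUnitary_mul_mul]
  have hdet : IsUnit (fromBlocks UA 0 0 UD).det := by
    rw [det_fromBlocks_zero₂₁]
    exact (UnitaryGroup.det_isUnit _).mul (UnitaryGroup.det_isUnit _)
  rw [← iPos_transpose_mul_mul (hA.fromBlocks (by simp) hD) hdet, hdiag, iPos_diagonal,
    Nat.card_congr Equiv.subtypeSum, Nat.card_sum, iPos, iPos, dif_pos hA, dif_pos hD]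
  rfl

lemma iNeg_fromBlocks_zero {A : Matrix m m ℝ} (hA : A.IsHermitian) {D : Matrix n n ℝ}
    (hD : D.IsHermitian) : iNeg (fromBlocks A 0 0 D) = iNeg A + iNeg D := by
  rw [iNeg_eq_iPos_neg (hA.fromBlocks (by simp) hD), iNeg_eq_iPos_neg hA, iNeg_eq_iPos_neg hD,
    ← iPos_fromBlocks_zero hA.neg hD.neg, fromBlocks_neg, neg_zero, neg_zero]

lemma iPos_fromBlocks_of_mul_eq {A : Matrix m m ℝ} (hA : A.IsHermitian) {D : Matrix n n ℝ}
    (hD : D.IsHermitian) {B Z : Matrix m n ℝ} (hZ : A * Z = B) (hZB : Zᵀ * B = 0) :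
    iPos (fromBlocks A B Bᵀ D) = iPos A + iPos D := by
  have hZA : Zᵀ * A = Bᵀ := by
    rw [← hZ, transpose_mul, ← conjTranspose_eq_transpose_of_trivial A, hA]
  have hcongr : (fromBlocks 1 (-Z) 0 1)ᵀ * fromBlocks A B Bᵀ D * fromBlocks 1 (-Z) 0 1 =
      fromBlocks A 0 0 D := by
    simp [fromBlocks_transpose, fromBlocks_multiply, hZ, hZA, hZB]
  rw [← iPos_transpose_mul_mul (hA.fromBlocks (by simp) hD) (P := fromBlocks 1 (-Z) 0 1)
    (by simp), hcongr, iPos_fromBlocks_zero hA hD]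

lemma iNeg_fromBlocks_of_mul_eq {A : Matrix m m ℝ} (hA : A.IsHermitian) {D : Matrix n n ℝ}
    (hD : D.IsHermitian) {B Z : Matrix m n ℝ} (hZ : A * Z = B) (hZB : Zᵀ * B = 0) :
    iNeg (fromBlocks A B Bᵀ D) = iNeg A + iNeg D := by
  rw [iNeg_eq_iPos_neg (hA.fromBlocks (by simp) hD), iNeg_eq_iPos_neg hA, iNeg_eq_iPos_neg hD,
    fromBlocks_neg, ← transpose_neg,
    iPos_fromBlocks_of_mul_eq hA.neg hD.neg (Z := Z) (by rw [Matrix.neg_mul, hZ])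
      (by rw [Matrix.mul_neg, hZB, neg_zero])]

lemma iPos_add_iNeg_of_det_ne_zero {M : Matrix n n ℝ} (hM : M.IsHermitian) (hdet : M.det ≠ 0) :
    iPos M + iNeg M = Fintype.card n := by
  have hev : ∀ i, hM.eigenvalues i ≠ 0 := fun i hi => hdet <| by
    rw [hM.det_eq_prod_eigenvalues]
    exact Finset.prod_eq_zero (Finset.mem_univ i) (by simp [hi])
  rw [iPos, iNeg, dif_pos hM, dif_pos hM, Nat.card_eq_fintype_card, Nat.card_eq_fintype_card,
    ← Fintype.card_subtype_or_disjoint _ _ fun p hpos hneg i hi => (hpos i hi).asymm (hneg i hi)]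
  exact Fintype.card_congr (Equiv.subtypeUnivEquiv fun i => (hev i).symm.lt_or_gt)

lemma inertia_fromBlocks_vecMulVec_single {A : Matrix m m ℝ} (hA : A.IsHermitian)
    {D : Matrix n n ℝ} (hD : D.IsHermitian) {u : m} {z : m → ℝ} (hz : A *ᵥ z = Pi.single u 1)
    (hzu : z u = 0) (r : n → ℝ) :
    iPos (fromBlocks A (vecMulVec (Pi.single u 1) r) (vecMulVec (Pi.single u 1) r)ᵀ D) =
        iPos A + iPos D ∧
      iNeg (fromBlocks A (vecMulVec (Pi.single u 1) r) (vecMulVec (Pi.single u 1) r)ᵀ D) =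
        iNeg A + iNeg D := by
  have hZ : A * vecMulVec z r = vecMulVec (Pi.single u 1) r := by rw [mul_vecMulVec, hz]
  have hZB : (vecMulVec z r)ᵀ * vecMulVec (Pi.single u 1) r = 0 := by
    rw [transpose_vecMulVec, vecMulVec_mul_vecMulVec, dotProduct_single, hzu, zero_mul,
      zero_smul, vecMulVec_zero]
  exact ⟨iPos_fromBlocks_of_mul_eq hA hD hZ hZB, iNeg_fromBlocks_of_mul_eq hA hD hZ hZB⟩

end

def weightedCycleSix (a : Fin 6 → ℝ) : Matrix (Fin 6) (Fin 6) ℝ :=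
  of fun i j => if j = i + 1 then a i else if i = j + 1 then a j else 0

namespace weightedCycleSix

variable (a : Fin 6 → ℝ)

lemma isHermitian : (weightedCycleSix a).IsHermitian := by
  ext i j
  fin_cases i <;> fin_cases j <;> simp [weightedCycleSix]

lemma mulVec_eq (v : Fin 6 → ℝ) :
    weightedCycleSix a *ᵥ v = ![a 0 * v 1 + a 5 * v 5, a 0 * v 0 + a 1 * v 2, a 1 * v 1 + a 2 * v 3,
      a 2 * v 2 + a 3 * v 4, a 3 * v 3 + a 4 * v 5, a 4 * v 4 + a 5 * v 0] := by
  ext i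
  fin_cases i <;> simp [weightedCycleSix, mulVec, dotProduct, Fin.sum_univ_six, add_comm]

lemma transpose_alternating_mul_mul :
    (diagonal fun i : Fin 6 => (-1 : ℝ) ^ (i : ℕ))ᵀ * weightedCycleSix a *
      diagonal (fun i : Fin 6 => (-1 : ℝ) ^ (i : ℕ)) = -weightedCycleSix a := by
  ext i j
  fin_cases i <;> fin_cases j <;> simp [weightedCycleSix] <;> ring

variable {a}

-- the weights of the two perfect matchings of `C₆`
lemma matching_weights_pos (ha : ∀ i, 0 < a i) : 0 < a 0 * a 2 * a 4 + a 1 * a 3 * a 5 := by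
  have := ha 0; have := ha 1; have := ha 2; have := ha 3; have := ha 4; have := ha 5
  positivity

lemma det_ne_zero (ha : ∀ i, 0 < a i) : (weightedCycleSix a).det ≠ 0 := by
  have hq := matching_weights_pos ha
  refine fun h => ?_
  obtain ⟨v, hv, hAv⟩ := exists_mulVec_eq_zero_iff.mpr h
  rw [mulVec_eq] at hAv
  have e0 := congrFun hAv 0; have e1 := congrFun hAv 1; have e2 := congrFun hAv 2
  have e3 := congrFun hAv 3; have e4 := congrFun hAv 4; have e5 := congrFun hAv 5
  simp only [cons_val_zero, cons_val_one, cons_val, Pi.zero_apply] at e0 e1 e2 e3 e4 e5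
  have hv0 : v 0 = 0 := by
    refine (mul_eq_zero.mp ?_).resolve_left hq.ne'
    linear_combination a 2 * a 4 * e1 - a 1 * a 4 * e3 + a 1 * a 3 * e5
  have hv1 : v 1 = 0 := by
    refine (mul_eq_zero.mp ?_).resolve_left hq.ne'
    linear_combination a 2 * a 4 * e0 + a 3 * a 5 * e2 - a 2 * a 5 * e4
  have hv2 : v 2 = 0 := by simpa [hv0, (ha 1).ne'] using e1
  have hv3 : v 3 = 0 := by simpa [hv1, (ha 2).ne'] using e2
  have hv4 : v 4 = 0 := by simpa [hv2, (ha 3).ne'] using e3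
  have hv5 : v 5 = 0 := by simpa [hv3, (ha 4).ne'] using e4
  exact hv (by ext i; fin_cases i <;> assumption)

lemma exists_mulVec_eq_single_zero (ha : ∀ i, 0 < a i) :
    ∃ z, weightedCycleSix a *ᵥ z = Pi.single 0 1 ∧ z 0 = 0 := by
  have hq := (matching_weights_pos ha).ne'
  refine ⟨(a 0 * a 2 * a 4 + a 1 * a 3 * a 5)⁻¹ • ![0, a 2 * a 4, 0, -(a 1 * a 4), 0, a 1 * a 3],
    ?_, by simp⟩
  rw [mulVec_eq]
  ext i
  fin_cases i <;> simp <;> field_simp <;> ring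

-- `C₆` is bipartite, so the alternating sign change is a congruence from `A` to `-A`.
lemma iPos_eq_iNeg : iPos (weightedCycleSix a) = iNeg (weightedCycleSix a) := by
  rw [iNeg_eq_iPos_neg (isHermitian a), ← transpose_alternating_mul_mul,
    iPos_transpose_mul_mul (isHermitian a) (by simp [det_diagonal, Fin.prod_univ_six])]

lemma iPos_eq_three (ha : ∀ i, 0 < a i) : iPos (weightedCycleSix a) = 3 := by
  have := iPos_add_iNeg_of_det_ne_zero (isHermitian a) (det_ne_zero ha)
  rw [← iPos_eq_iNeg, Fintype.card_fin] at this
  omega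

lemma iNeg_eq_three (ha : ∀ i, 0 < a i) : iNeg (weightedCycleSix a) = 3 :=
  iPos_eq_iNeg.symm.trans (iPos_eq_three ha)

end weightedCycleSix

theorem stmt19_general {W : Type*} [Fintype W] [DecidableEq W]
    (G : SimpleGraph W) (wG : W → W → ℝ) (hwG : IsWeighting G wG)
    (a : Fin 6 → ℝ) (ha : ∀ i, 0 < a i)
    (A : Matrix (Fin 6) (Fin 6) ℝ)
    (hA : ∀ i j, A i j = if j = i + 1 then a i else if i = j + 1 then a j else 0)
    (S : Finset W) (c : W → ℝ) :
    iPos (Matrix.fromBlocks A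
        (Matrix.of fun i b => if i = 0 ∧ b ∈ S then c b else 0)
        (Matrix.of fun b i => if i = 0 ∧ b ∈ S then c b else 0)
        (Matrix.of wG)) = 3 + iPos (Matrix.of wG) ∧
      iNeg (Matrix.fromBlocks A
        (Matrix.of fun i b => if i = 0 ∧ b ∈ S then c b else 0)
        (Matrix.of fun b i => if i = 0 ∧ b ∈ S then c b else 0)
        (Matrix.of wG)) = 3 + iNeg (Matrix.of wG) := by
  obtain rfl : A = weightedCycleSix a := Matrix.ext hA
  have hG : (Matrix.of wG).IsHermitian := Matrix.ext fun i j => hwG.1 j i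
  obtain ⟨z, hz, hz0⟩ := weightedCycleSix.exists_mulVec_eq_single_zero ha
  have hB : (Matrix.of fun i b => if i = 0 ∧ b ∈ S then c b else 0 : Matrix (Fin 6) W ℝ) =
      vecMulVec (Pi.single 0 1) fun b => if b ∈ S then c b else 0 := by
    ext i b
    by_cases hi : i = 0 <;> simp [vecMulVec_apply, hi]
  have hBt : (Matrix.of fun b i => if i = 0 ∧ b ∈ S then c b else 0 : Matrix W (Fin 6) ℝ) =
      (vecMulVec (Pi.single 0 1) fun b => if b ∈ S then c b else 0)ᵀ := by
    rw [← hB]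
    rfl
  obtain ⟨hpos, hneg⟩ := inertia_fromBlocks_vecMulVec_single (weightedCycleSix.isHermitian a) hG
    hz hz0 fun b => if b ∈ S then c b else 0
  rw [hB, hBt, hpos, hneg, weightedCycleSix.iPos_eq_three ha, weightedCycleSix.iNeg_eq_three ha]
  exact ⟨rfl, rfl⟩

/-- Joining a vertex `u` (index `0`) of a weighted 6-cycle to `k ≥ 1` vertices of a
weighted graph `G` adds exactly `3` to each inertia index, for all edge weights. -/
theorem stmt19 {W : Type*} [Fintype W] [DecidableEq W]
    (G : SimpleGraph W) (wG : W → W → ℝ) (hwG : IsWeighting G wG)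
    (a : Fin 6 → ℝ) (ha : ∀ i, 0 < a i)
    (A : Matrix (Fin 6) (Fin 6) ℝ)
    (hA : ∀ i j, A i j = if j = i + 1 then a i else if i = j + 1 then a j else 0)
    (S : Finset W) (hS : S.Nonempty) (c : W → ℝ) (hc : ∀ b ∈ S, 0 < c b) :
    iPos (Matrix.fromBlocks A
        (Matrix.of fun i b => if i = 0 ∧ b ∈ S then c b else 0)
        (Matrix.of fun b i => if i = 0 ∧ b ∈ S then c b else 0)
        (Matrix.of wG)) = 3 + iPos (Matrix.of wG) ∧
      iNeg (Matrix.fromBlocks A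
        (Matrix.of fun i b => if i = 0 ∧ b ∈ S then c b else 0)
        (Matrix.of fun b i => if i = 0 ∧ b ∈ S then c b else 0)
        (Matrix.of wG)) = 3 + iNeg (Matrix.of wG) :=
  stmt19_general G wG hwG a ha A hA S c
end
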